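/- arXiv:2003.11270 — 6 statements merged into one kernel-verified Lean document; each statement's English description precedes it below -/
import Mathlib

section
/- Let G be a graph with Gallai–Edmonds decomposition (D; A; C), where D = {v : ν(G - v) = ν(G)}, A = N_G(D), C = V \ (D ∪ A). If e is a pair of vertices both lying in A, or with one endpoint in A and one in C, then G + e and G - e have the same Gallai–Edmonds decomposition as G (same sets D, A, C and same connected components of the induced subgraph on D). -/
/-!
Everything reduces to the case `u ∈ A(G)`, `w ∉ D(G)`. The key fact is that a matching missing
both `u ∈ A(G)` and some `v ∉ D(G)`, `v ≠ u`, has at most `ν(G) - 2` edges: switching it against a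
maximum matching that misses a neighbour `d ∈ D(G)` of `u`, along the maximal alternating path
from `u`, yields a maximum matching missing `u`, or one missing `v`, or a matching of size
`ν(G) - 1` missing `u`, `v` and `d`, which extends by `ud`.

Hence no maximum matching of `G + uw` uses `uw`, so the maximum matchings of `G + uw` are
matchings of `G - uw`. This gives `ν(G - uw) = ν(G + uw)` and `D(G + uw) ⊆ D(G - uw)`, and as
`G - uw ≤ G ≤ G + uw`, all three graphs have the same `D`. Since `uw` has no end in `D`, the
adjacencies at `D`, hence `A`, `C` and the components of `G[D]`, do not change.
-/

attribute [local instance] Classical.propDecidable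

variable {V : Type} [Fintype V] [DecidableEq V]

/-- A matching in a simple graph `G`: a finite set of edges of `G`, pairwise vertex-disjoint. -/
def IsGMatching (G : SimpleGraph V) (M : Finset (Sym2 V)) : Prop :=
  (∀ e ∈ M, e ∈ G.edgeSet) ∧ ∀ e ∈ M, ∀ f ∈ M, e ≠ f → ∀ v, v ∈ e → v ∉ f

/-- The matching number `ν(G)` of a simple graph. -/
noncomputable def gnu (G : SimpleGraph V) : ℕ :=
  ((Finset.univ : Finset (Sym2 V)).powerset.filter fun M => IsGMatching G M).sup Finset.card

/-- The graph `G - v`: delete the vertex `v` (i.e. all edges incident to it). -/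
def delV (G : SimpleGraph V) (v : V) : SimpleGraph V where
  Adj x y := G.Adj x y ∧ x ≠ v ∧ y ≠ v
  symm := ⟨fun _ _ ⟨h, hx, hy⟩ => ⟨h.symm, hy, hx⟩⟩
  loopless := ⟨fun x h => G.loopless.irrefl x h.1⟩

/-- The Gallai–Edmonds set `D(G) = {v : ν(G - v) = ν(G)}`. -/
def Dset (G : SimpleGraph V) : Set V := {v | gnu (delV G v) = gnu G}

/-- The Gallai–Edmonds set `A(G) = N_G(D(G))`. -/
def Aset (G : SimpleGraph V) : Set V := {w | w ∉ Dset G ∧ ∃ d ∈ Dset G, G.Adj w d}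

/-- The Gallai–Edmonds set `C(G) = V \ (D(G) ∪ A(G))`. -/
def Cset (G : SimpleGraph V) : Set V := (Dset G ∪ Aset G)ᶜ

/-- Reachability inside the induced subgraph `G[S]` (same component of `G[S]`). -/
def reachOn (G : SimpleGraph V) (S : Set V) : V → V → Prop :=
  Relation.ReflTransGen fun a b => G.Adj a b ∧ a ∈ S ∧ b ∈ S

section Switch

variable {V : Type} {G : SimpleGraph V} {M N M₁ N₁ : Finset (Sym2 V)} {e f : Sym2 V}
  {a b x y t v : V}

def covered (M : Finset (Sym2 V)) : Set V := {v | ∃ e ∈ M, v ∈ e}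

lemma covered_mono (h : M ⊆ N) : covered M ⊆ covered N :=
  fun _ ⟨e, he, hve⟩ => ⟨e, h he, hve⟩

lemma covered_insert : covered (insert s(a, b) M) = insert a (insert b (covered M)) := by
  ext v
  simp [covered, or_and_right, exists_or, eq_comm, or_assoc]

lemma notMem_covered_iff : v ∉ covered M ↔ ∀ e ∈ M, v ∉ e := by
  simp [covered]

lemma IsGMatching.subset (hM : IsGMatching G M) (h : N ⊆ M) : IsGMatching G N :=
  ⟨fun e he => hM.1 e (h he), fun e he f hf => hM.2 e (h he) f (h hf)⟩

lemma IsGMatching.eq_of_mem (hM : IsGMatching G M) (he : e ∈ M) (hf : f ∈ M) (hve : v ∈ e)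
    (hvf : v ∈ f) : e = f :=
  by_contra fun hef => hM.2 e he f hf hef v hve hvf

lemma IsGMatching.notMem_covered_erase (hM : IsGMatching G M) (he : e ∈ M) (hve : v ∈ e) :
    v ∉ covered (M.erase e) :=
  fun ⟨_, hf, hvf⟩ =>
    Finset.ne_of_mem_erase hf (hM.eq_of_mem (Finset.mem_of_mem_erase hf) he hvf hve)

lemma IsGMatching.insert (hM : IsGMatching G M) (hab : G.Adj a b) (ha : a ∉ covered M)
    (hb : b ∉ covered M) : IsGMatching G (insert s(a, b) M) := by
  refine ⟨?_, ?_⟩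
  · simpa [Finset.forall_mem_insert] using ⟨hab, hM.1⟩
  · have hab' : ∀ f ∈ M, ∀ v ∈ s(a, b), v ∉ f := fun f hf v hv hvf => by
      rcases Sym2.mem_iff.mp hv with rfl | rfl
      exacts [ha ⟨f, hf, hvf⟩, hb ⟨f, hf, hvf⟩]
    simp only [Finset.mem_insert]
    rintro e (rfl | he) f (rfl | hf) hef v hve hvf
    exacts [hef rfl, hab' f hf v hve hvf, hab' e he v hvf hve, hM.2 e he f hf hef v hve hvf]

lemma card_insert_of_notMem_covered (ha : a ∉ covered M) :
    (insert s(a, b) M).card = M.card + 1 :=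
  Finset.card_insert_of_notMem fun h => ha ⟨_, h, Sym2.mem_mk_left a b⟩

/-- What `M₁ = M ∆ P` and `N₁ = N ∆ P` satisfy when `P` is a maximal `M`/`N`-alternating path
of even length from `x` (first edge in `M`, if any) to `t`. -/
structure IsEvenSwitch (M N M₁ N₁ : Finset (Sym2 V)) (x t : V) : Prop where
  card_fst : M₁.card = M.card
  card_snd : N₁.card = N.card
  start_notMem : x ∉ covered M₁
  end_mem : t ∈ insert x (covered N)
  end_notMem : t ∉ covered N₁
  covered_fst : covered M₁ ⊆ insert t (covered M)
  covered_snd : covered N₁ ⊆ insert x (covered N)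

/-- What `M₁ = M ∆ P` and `N₁ = N ∆ P` satisfy when `P` is a maximal `M`/`N`-alternating path
of odd length from `x` (first edge in `M`) to `t`. -/
structure IsOddSwitch (M N M₁ N₁ : Finset (Sym2 V)) (x t : V) : Prop where
  card_fst : M₁.card + 1 = M.card
  card_snd : N₁.card = N.card + 1
  start_notMem : x ∉ covered M₁
  end_ne : t ≠ x
  end_mem : t ∈ covered M
  end_notMem : t ∉ covered M₁
  covered_fst : covered M₁ ⊆ covered M
  covered_snd : covered N₁ ⊆ insert x (insert t (covered N))

lemma IsOddSwitch.cons (h : IsOddSwitch N (M.erase s(x, y)) N₁ M₁ y t) (hM : IsGMatching G M)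
    (hxy : s(x, y) ∈ M) (hN₁ : IsGMatching G N₁) (hxN : x ∉ covered N) (hyN : y ∈ covered N) :
    IsGMatching G (insert s(x, y) N₁) ∧ IsEvenSwitch M N M₁ (insert s(x, y) N₁) x t := by
  have hx : x ∉ covered (M.erase s(x, y)) := hM.notMem_covered_erase hxy (Sym2.mem_mk_left x y)
  have hxN₁ : x ∉ covered N₁ := fun hx => hxN (h.covered_fst hx)
  have hne : x ≠ y := G.ne_of_adj (hM.1 _ hxy)
  have htx : t ≠ x := fun htx => hxN (htx ▸ h.end_mem)
  refine ⟨hN₁.insert (hM.1 _ hxy) hxN₁ h.start_notMem, ?_, ?_, ?_, ?_, ?_, ?_, ?_⟩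
  · rw [h.card_snd, Finset.card_erase_add_one hxy]
  · rw [card_insert_of_notMem_covered hxN₁, h.card_fst]
  · intro hx'
    rcases h.covered_snd hx' with hxy' | hxt | hx''
    exacts [hne hxy', htx hxt.symm, hx hx'']
  · exact Or.inr h.end_mem
  · rw [covered_insert]
    rintro (htx' | hty | ht)
    exacts [htx htx', h.end_ne hty, h.end_notMem ht]
  · intro v hv
    rcases h.covered_snd hv with rfl | rfl | hv
    exacts [Or.inr ⟨_, hxy, Sym2.mem_mk_right x v⟩, Or.inl rfl,
      Or.inr (covered_mono (Finset.erase_subset _ _) hv)]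
  · rw [covered_insert]
    rintro v (rfl | rfl | hv)
    exacts [Or.inl rfl, Or.inr hyN, Or.inr (h.covered_fst hv)]

lemma IsEvenSwitch.cons (h : IsEvenSwitch N (M.erase s(x, y)) N₁ M₁ y t)
    (hM : IsGMatching G M) (hxy : s(x, y) ∈ M) (hN₁ : IsGMatching G N₁) (hxN : x ∉ covered N)
    (hyN : y ∈ covered N) :
    IsGMatching G (insert s(x, y) N₁) ∧ IsOddSwitch M N M₁ (insert s(x, y) N₁) x t := by
  have hx : x ∉ covered (M.erase s(x, y)) := hM.notMem_covered_erase hxy (Sym2.mem_mk_left x y)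
  have hne : x ≠ y := G.ne_of_adj (hM.1 _ hxy)
  have hsub : insert y (covered (M.erase s(x, y))) ⊆ covered M :=
    Set.insert_subset ⟨_, hxy, Sym2.mem_mk_right x y⟩ (covered_mono (Finset.erase_subset _ _))
  have htx : t ≠ x := by
    rintro rfl
    rcases h.end_mem with htx | ht
    exacts [hne htx, hx ht]
  have hxN₁ : x ∉ covered N₁ := by
    intro hx'
    rcases h.covered_fst hx' with hxt | hx'
    exacts [htx hxt.symm, hxN hx']
  refine ⟨hN₁.insert (hM.1 _ hxy) hxN₁ h.start_notMem, ?_, ?_, ?_, htx, hsub h.end_mem,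
    h.end_notMem, h.covered_snd.trans hsub, ?_⟩
  · rw [h.card_snd, Finset.card_erase_add_one hxy]
  · rw [card_insert_of_notMem_covered hxN₁, h.card_fst]
  · intro hx'
    rcases h.covered_snd hx' with hxy' | hx''
    exacts [hne hxy', hx hx'']
  · rw [covered_insert]
    rintro v (rfl | rfl | hv)
    exacts [Or.inl rfl, Or.inr (Or.inr hyN), Or.inr (h.covered_fst hv)]

theorem exists_switch {M N : Finset (Sym2 V)} {x : V} (hM : IsGMatching G M)
    (hN : IsGMatching G N) (hxN : x ∉ covered N) :
    ∃ M₁ N₁ t, IsGMatching G M₁ ∧ IsGMatching G N₁ ∧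
      (IsEvenSwitch M N M₁ N₁ x t ∨ IsOddSwitch M N M₁ N₁ x t) := by
  by_cases hxM : x ∈ covered M
  swap
  · exact ⟨M, N, x, hM, hN, Or.inl ⟨rfl, rfl, hxM, Set.mem_insert x _, hxN,
      Set.subset_insert x _, Set.subset_insert x _⟩⟩
  obtain ⟨e, hxy, hxe⟩ := hxM
  obtain ⟨y, rfl⟩ := Sym2.mem_iff_exists.mp hxe
  have hx : x ∉ covered (M.erase s(x, y)) := hM.notMem_covered_erase hxy (Sym2.mem_mk_left x y)
  have hy : y ∉ covered (M.erase s(x, y)) := hM.notMem_covered_erase hxy (Sym2.mem_mk_right x y)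
  have hM' : IsGMatching G (M.erase s(x, y)) := hM.subset (Finset.erase_subset _ _)
  by_cases hyN : y ∈ covered N
  -- the path goes on from `y` with an `N`-edge: switch its remainder with the roles exchanged
  · obtain ⟨N₁, M₁, t, hN₁, hM₁, h | h⟩ := exists_switch hN hM' hy
    · obtain ⟨hN₁', h'⟩ := h.cons hM hxy hN₁ hxN hyN
      exact ⟨M₁, _, t, hM₁, hN₁', Or.inr h'⟩
    · obtain ⟨hN₁', h'⟩ := h.cons hM hxy hN₁ hxN hyN
      exact ⟨M₁, _, t, hM₁, hN₁', Or.inl h'⟩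
  · refine ⟨_, _, y, hM', hN.insert (hM.1 _ hxy) hxN hyN, Or.inr ⟨Finset.card_erase_add_one hxy,
      card_insert_of_notMem_covered hxN, hx, (G.ne_of_adj (hM.1 _ hxy)).symm,
      ⟨_, hxy, Sym2.mem_mk_right x y⟩, hy, covered_mono (Finset.erase_subset _ _), ?_⟩⟩
    rw [covered_insert]
termination_by M.card + N.card
decreasing_by
  have := Finset.card_erase_add_one hxy
  omega

end Switch

section MatchingNumber

open SimpleGraph

variable {V : Type} {G H : SimpleGraph V} {M K : Finset (Sym2 V)} {e : Sym2 V} {v : V}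

lemma IsGMatching.mono (hM : IsGMatching G M) (h : G ≤ H) : IsGMatching H M :=
  ⟨fun e he => edgeSet_mono h (hM.1 e he), hM.2⟩

lemma IsGMatching.deleteEdges_of_sup_edge (hK : IsGMatching (G ⊔ fromEdgeSet {e}) K)
    (he : e ∉ K) : IsGMatching (G.deleteEdges {e}) K := by
  refine ⟨fun f hf => ?_, hK.2⟩
  have hfe : f ≠ e := fun h => he (h ▸ hf)
  simpa [edgeSet_sup, hfe] using hK.1 f hf

lemma delV_le (G : SimpleGraph V) (v : V) : delV G v ≤ G := fun _ _ h => h.1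

lemma delV_mono (h : G ≤ H) (v : V) : delV G v ≤ delV H v := fun _ _ hab => ⟨h hab.1, hab.2⟩

lemma mem_edgeSet_delV : e ∈ (delV G v).edgeSet ↔ e ∈ G.edgeSet ∧ v ∉ e := by
  induction e using Sym2.ind with
  | _ a b =>
    simp only [mem_edgeSet, Sym2.mem_iff, not_or, delV]
    exact and_congr_right fun _ => by rw [ne_comm, ne_comm (a := b)]

lemma isGMatching_delV_iff : IsGMatching (delV G v) M ↔ IsGMatching G M ∧ v ∉ covered M := by
  simp only [IsGMatching, mem_edgeSet_delV, notMem_covered_iff]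
  exact ⟨fun h => ⟨⟨fun e he => (h.1 e he).1, h.2⟩, fun e he => (h.1 e he).2⟩,
    fun h => ⟨fun e he => ⟨h.1.1 e he, h.2 e he⟩, h.1.2⟩⟩

variable [Fintype V]

lemma IsGMatching.card_le_gnu (hM : IsGMatching G M) : M.card ≤ gnu G :=
  Finset.le_sup (f := Finset.card)
    (Finset.mem_filter.mpr ⟨Finset.mem_powerset.mpr (Finset.subset_univ M), hM⟩)

lemma exists_isGMatching_card_eq_gnu (G : SimpleGraph V) :
    ∃ M, IsGMatching G M ∧ M.card = gnu G := by
  have hempty : IsGMatching G ∅ := ⟨by simp, by simp⟩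
  obtain ⟨M, hM, hMc⟩ := Finset.exists_mem_eq_sup _
    ⟨∅, Finset.mem_filter.mpr ⟨Finset.empty_mem_powerset _, hempty⟩⟩ Finset.card
  exact ⟨M, (Finset.mem_filter.mp hM).2, hMc.symm⟩

lemma gnu_mono (h : G ≤ H) : gnu G ≤ gnu H := by
  obtain ⟨M, hM, hMc⟩ := exists_isGMatching_card_eq_gnu G
  exact hMc ▸ (hM.mono h).card_le_gnu

lemma mem_Dset_iff : v ∈ Dset G ↔ ∃ M, IsGMatching G M ∧ M.card = gnu G ∧ v ∉ covered M := by
  constructor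
  · intro hv
    obtain ⟨M, hM, hMc⟩ := exists_isGMatching_card_eq_gnu (delV G v)
    obtain ⟨hM, hvM⟩ := isGMatching_delV_iff.mp hM
    exact ⟨M, hM, hMc.trans hv, hvM⟩
  · rintro ⟨M, hM, hMc, hvM⟩
    refine le_antisymm (gnu_mono (delV_le G v)) ?_
    exact hMc ▸ (isGMatching_delV_iff.mpr ⟨hM, hvM⟩).card_le_gnu

end MatchingNumber

section GallaiEdmonds

open SimpleGraph

variable {V : Type} [Fintype V] {G H₁ H₂ H₃ : SimpleGraph V} {M K : Finset (Sym2 V)}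
  {u v w : V}

theorem IsGMatching.card_add_two_le_gnu (hM : IsGMatching G M) (hu : u ∈ Aset G)
    (hv : v ∉ Dset G) (huv : u ≠ v) (hMu : u ∉ covered M) (hMv : v ∉ covered M) :
    M.card + 2 ≤ gnu G := by
  obtain ⟨huD, d, hdD, hud⟩ := hu
  obtain ⟨M', hM', hM'card, hdM'⟩ := mem_Dset_iff.mp hdD
  obtain ⟨M₁, N₁, t, hM₁, hN₁, h | h⟩ := exists_switch hM' hM hMu
  · exact absurd (mem_Dset_iff.mpr ⟨M₁, hM₁, h.card_fst.trans hM'card, h.start_notMem⟩) huD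
  by_cases hvt : v = t
  · subst hvt
    have hdM₁ : d ∉ covered M₁ := fun hd => hdM' (h.covered_fst hd)
    refine absurd (mem_Dset_iff.mpr ⟨_, hM₁.insert hud h.start_notMem hdM₁, ?_, ?_⟩) hv
    · rw [card_insert_of_notMem_covered h.start_notMem, h.card_fst, hM'card]
    · rw [covered_insert]
      rintro (rfl | rfl | hv')
      exacts [huv rfl, hv hdD, h.end_notMem hv']
  · by_contra hlt
    have hvN₁ : v ∉ covered N₁ := fun hv' => by
      rcases h.covered_snd hv' with rfl | rfl | hv'
      exacts [huv rfl, hvt rfl, hMv hv']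
    have hN₁card : N₁.card = gnu G := le_antisymm hN₁.card_le_gnu (by rw [h.card_snd]; omega)
    exact hv (mem_Dset_iff.mpr ⟨N₁, hN₁, hN₁card, hvN₁⟩)

theorem notMem_of_isGMatching_sup_edge (hu : u ∈ Aset G) (hw : w ∉ Dset G)
    (hK : IsGMatching (G ⊔ fromEdgeSet {s(u, w)}) K)
    (hKcard : K.card = gnu (G ⊔ fromEdgeSet {s(u, w)})) : s(u, w) ∉ K := by
  intro huw
  have huw' : u ≠ w := (G ⊔ fromEdgeSet {s(u, w)}).ne_of_adj (hK.1 _ huw)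
  have hK' : IsGMatching G (K.erase s(u, w)) :=
    ((hK.subset (Finset.erase_subset _ _)).deleteEdges_of_sup_edge
      (Finset.notMem_erase _ _)).mono (G.deleteEdges_le _)
  have h₁ := hK'.card_add_two_le_gnu hu hw huw' (hK.notMem_covered_erase huw (Sym2.mem_mk_left u w))
    (hK.notMem_covered_erase huw (Sym2.mem_mk_right u w))
  have h₂ := gnu_mono (le_sup_left : G ≤ G ⊔ fromEdgeSet {s(u, w)})
  have h₃ := Finset.card_erase_add_one huw
  omega

lemma gnu_eq_of_forall_isGMatching (hle : H₁ ≤ H₂)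
    (hmax : ∀ K, IsGMatching H₂ K → K.card = gnu H₂ → IsGMatching H₁ K) : gnu H₁ = gnu H₂ := by
  obtain ⟨K, hK, hKcard⟩ := exists_isGMatching_card_eq_gnu H₂
  exact le_antisymm (gnu_mono hle) (hKcard ▸ (hmax K hK hKcard).card_le_gnu)

lemma Dset_subset_of_forall_isGMatching (hle : H₁ ≤ H₂)
    (hmax : ∀ K, IsGMatching H₂ K → K.card = gnu H₂ → IsGMatching H₁ K) :
    Dset H₂ ⊆ Dset H₁ := by
  intro v hv
  obtain ⟨K, hK, hKcard, hvK⟩ := mem_Dset_iff.mp hv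
  exact mem_Dset_iff.mpr ⟨K, hmax K hK hKcard,
    hKcard.trans (gnu_eq_of_forall_isGMatching hle hmax).symm, hvK⟩

lemma Dset_eq_of_le_of_le (h₁₂ : H₁ ≤ H₂) (h₂₃ : H₂ ≤ H₃) (hgnu : gnu H₁ = gnu H₃)
    (hD : Dset H₃ ⊆ Dset H₁) : Dset H₂ = Dset H₁ := by
  have hgnu₁₂ : gnu H₁ = gnu H₂ := le_antisymm (gnu_mono h₁₂) (hgnu ▸ gnu_mono h₂₃)
  refine Set.Subset.antisymm (fun v hv => hD ?_) fun v hv => ?_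
  · exact le_antisymm (gnu_mono (delV_le H₃ v))
      (hgnu ▸ hgnu₁₂ ▸ hv ▸ gnu_mono (delV_mono h₂₃ v))
  · exact le_antisymm (gnu_mono (delV_le H₂ v))
      (hgnu₁₂ ▸ hv ▸ gnu_mono (delV_mono h₁₂ v))

theorem Dset_sup_edge_eq_and_Dset_deleteEdges_eq (hu : u ∈ Aset G) (hw : w ∉ Dset G) :
    Dset (G ⊔ fromEdgeSet {s(u, w)}) = Dset G ∧ Dset (G.deleteEdges {s(u, w)}) = Dset G := by
  have hle : G.deleteEdges {s(u, w)} ≤ G ⊔ fromEdgeSet {s(u, w)} :=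
    (G.deleteEdges_le _).trans le_sup_left
  have hmax : ∀ K, IsGMatching (G ⊔ fromEdgeSet {s(u, w)}) K →
      K.card = gnu (G ⊔ fromEdgeSet {s(u, w)}) → IsGMatching (G.deleteEdges {s(u, w)}) K :=
    fun K hK hKcard => hK.deleteEdges_of_sup_edge (notMem_of_isGMatching_sup_edge hu hw hK hKcard)
  have hgnu := gnu_eq_of_forall_isGMatching hle hmax
  have hD := Dset_subset_of_forall_isGMatching hle hmax
  have hG := Dset_eq_of_le_of_le (G.deleteEdges_le _) le_sup_left hgnu hD
  exact ⟨(Dset_eq_of_le_of_le hle le_rfl hgnu hD).trans hG.symm, hG.symm⟩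

end GallaiEdmonds

section Decomposition

open SimpleGraph

variable {V : Type} {G G' : SimpleGraph V} {S : Set V} {a b c d : V}

lemma sup_edge_adj_iff (ha : a ∉ S) (hb : b ∉ S) (hd : d ∈ S) :
    (G ⊔ fromEdgeSet {s(a, b)}).Adj c d ↔ G.Adj c d := by
  simp only [sup_adj, fromEdgeSet_adj, Set.mem_singleton_iff, Sym2.eq_iff]
  refine or_iff_left ?_
  rintro ⟨⟨-, rfl⟩ | ⟨-, rfl⟩, -⟩
  exacts [hb hd, ha hd]

lemma deleteEdges_adj_iff (ha : a ∉ S) (hb : b ∉ S) (hd : d ∈ S) :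
    (G.deleteEdges {s(a, b)}).Adj c d ↔ G.Adj c d := by
  simp only [deleteEdges_adj, Set.mem_singleton_iff, Sym2.eq_iff]
  refine and_iff_left ?_
  rintro (⟨-, rfl⟩ | ⟨-, rfl⟩)
  exacts [hb hd, ha hd]

lemma reachOn_congr (hadj : ∀ c d, d ∈ S → (G'.Adj c d ↔ G.Adj c d)) :
    reachOn G' S = reachOn G S := by
  unfold reachOn
  congr! 3 with c d
  exact and_congr_left fun h => hadj c d h.2

variable [Fintype V]

theorem decomposition_eq_of_Dset_eq (hD : Dset G' = Dset G)
    (hadj : ∀ c d, d ∈ Dset G → (G'.Adj c d ↔ G.Adj c d)) :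
    Aset G' = Aset G ∧ Cset G' = Cset G ∧
      ∀ x y, reachOn G' (Dset G') x y ↔ reachOn G (Dset G) x y := by
  have hA : Aset G' = Aset G := by
    rw [Aset, Aset, hD]
    exact Set.ext fun c => and_congr_right fun _ =>
      exists_congr fun d => and_congr_right fun hd => hadj c d hd
  refine ⟨hA, by rw [Cset, Cset, hD, hA], ?_⟩
  rw [hD, reachOn_congr hadj]
  exact fun _ _ => Iff.rfl

end Decomposition

theorem same_GE_of_edge_in_A_or_AC_general {V : Type} [Fintype V]
    (G : SimpleGraph V) (u w : V)
    (h : (u ∈ Aset G ∧ w ∈ Aset G) ∨ (u ∈ Aset G ∧ w ∈ Cset G) ∨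
         (u ∈ Cset G ∧ w ∈ Aset G)) :
    ∀ G' ∈ ({G ⊔ SimpleGraph.fromEdgeSet {s(u, w)},
             G.deleteEdges {s(u, w)}} : Set (SimpleGraph V)),
      Dset G' = Dset G ∧ Aset G' = Aset G ∧ Cset G' = Cset G ∧
      ∀ x y, reachOn G' (Dset G') x y ↔ reachOn G (Dset G) x y := by
  obtain ⟨a, b, hab, ha, hb⟩ : ∃ a b, s(u, w) = s(a, b) ∧ a ∈ Aset G ∧ b ∉ Dset G := by
    rcases h with ⟨hu, hw⟩ | ⟨hu, hw⟩ | ⟨hu, hw⟩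
    exacts [⟨u, w, rfl, hu, hw.1⟩, ⟨u, w, rfl, hu, fun hD => hw (Or.inl hD)⟩,
      ⟨w, u, Sym2.eq_swap, hw, fun hD => hu (Or.inl hD)⟩]
  obtain ⟨hDsup, hDdel⟩ := Dset_sup_edge_eq_and_Dset_deleteEdges_eq ha hb
  rw [hab]
  rintro G' (rfl | rfl)
  · exact ⟨hDsup, decomposition_eq_of_Dset_eq hDsup fun c d hd => sup_edge_adj_iff ha.1 hb hd⟩
  · exact ⟨hDdel, decomposition_eq_of_Dset_eq hDdel fun c d hd => deleteEdges_adj_iff ha.1 hb hd⟩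

/-- If both endpoints of `e = s(u,w)` lie in `A`, or one in `A` and one in `C`, then `G + e`
and `G - e` have the same Gallai–Edmonds decomposition as `G`: the same sets `D`, `A`, `C`,
and the same connected components of the induced subgraph on `D`. -/
theorem same_GE_of_edge_in_A_or_AC {V : Type} [Fintype V] [DecidableEq V]
    (G : SimpleGraph V) (u w : V) (huw : u ≠ w)
    (h : (u ∈ Aset G ∧ w ∈ Aset G) ∨ (u ∈ Aset G ∧ w ∈ Cset G) ∨
         (u ∈ Cset G ∧ w ∈ Aset G)) :
    ∀ G' ∈ ({G ⊔ SimpleGraph.fromEdgeSet {s(u, w)},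
             G.deleteEdges {s(u, w)}} : Set (SimpleGraph V)),
      Dset G' = Dset G ∧ Aset G' = Aset G ∧ Cset G' = Cset G ∧
      ∀ x y, reachOn G' (Dset G') x y ↔ reachOn G (Dset G) x y :=
  same_GE_of_edge_in_A_or_AC_general G u w h
end

section
/- Let K be a simplicial complex on vertex set V such that for every non-empty face σ ∈ K, the link lk_K(σ) has vanishing reduced homology in all dimensions ≥ d₀. Then for any vertex v of K, the induced subcomplex K - v (on V \ {v}) also has this property: for every non-empty face σ of K - v, the link lk_{K-v}(σ) has vanishing reduced homology in all dimensions ≥ d₀. -/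
attribute [local instance] Classical.propDecidable

variable {W : Type} [LinearOrder W] (F : Type) [Field F]

/-- The simplicial boundary operator on formal `F`-linear combinations of finite sets
(faces `s` of cardinality `n` being generators in degree `n`; the empty face is the
generator of the augmentation degree, so this computes *reduced* homology). -/
noncomputable def bdry (x : Finset W →₀ F) : Finset W →₀ F :=
  x.sum fun s a =>
    ∑ v ∈ s, (a * (-1 : F) ^ (s.filter fun w => w < v).card) • Finsupp.single (s.erase v) (1 : F)

/-- `K` is an (abstract, finite) simplicial complex: a hereditary family of finite sets. -/
def IsComplex (K : Finset (Finset W)) : Prop := ∀ s ∈ K, ∀ t ⊆ s, t ∈ K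

/-- The reduced homology (with coefficients in `F`) of the complex `K` vanishes in
dimension `d`: every reduced `d`-cycle of `K` is a boundary of a `(d+1)`-chain of `K`.
(A face of dimension `d` has cardinality `d + 1`.) -/
def VanishesAt (K : Finset (Finset W)) (d : ℕ) : Prop :=
  ∀ x : Finset W →₀ F, (∀ s ∈ x.support, s ∈ K ∧ s.card = d + 1) → bdry F x = 0 →
    ∃ y : Finset W →₀ F, (∀ s ∈ y.support, s ∈ K ∧ s.card = d + 2) ∧ bdry F y = x

/-- The link of a face `σ` in the complex `K`. -/
noncomputable def linkOf (K : Finset (Finset W)) (σ : Finset W) : Finset (Finset W) :=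
  K.filter fun τ => Disjoint τ σ ∧ τ ∪ σ ∈ K

/-! Since `v ∉ σ`, the link of `σ` in `K - v` is `L - v` for `L = lk_K(σ)`, and the link of `v`
in `L` is `lk_K(σ ∪ {v})` (empty, hence acyclic, when `σ ∪ {v} ∉ K`). So it suffices that
`H̃_d(L) = 0` and `H̃_d(lk_L v) = 0` imply `H̃_d(L - v) = 0`. A `d`-cycle `x` of `L - v` bounds
some `y` in `L`; split `y = y₀ + y₁` according to whether a face contains `v`. Then
`z = ∂y₁ = x - ∂y₀` avoids `v`, so each of its faces is `s \ {v}` for a face `s` of `y₁`: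
`z` is a `d`-cycle of `lk_L v`, as `∂z = ∂∂y₁ = 0`. Writing `z = ∂w` in `lk_L v ⊆ L - v`
gives `x = ∂(y₀ + w)`. -/

open Finset

noncomputable def faceSign (s : Finset W) (w : W) : F := (-1) ^ #{u ∈ s | u < w}

lemma faceSign_erase_of_not_lt {s : Finset W} {u w : W} (h : ¬w < u) :
    faceSign F (s.erase w) u = faceSign F s u := by
  rw [faceSign, filter_erase, erase_eq_of_notMem (by simp [h]), faceSign]

lemma faceSign_erase_of_lt {s : Finset W} {u w : W} (hw : w ∈ s) (h : w < u) :
    faceSign F s u = -faceSign F (s.erase w) u := by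
  rw [faceSign, faceSign, filter_erase, ← card_erase_add_one (mem_filter.2 ⟨hw, h⟩), pow_succ]
  ring

lemma faceSign_mul_faceSign_erase_swap {s : Finset W} {u w : W} (hw : w ∈ s) (hu : u ∈ s)
    (hne : w ≠ u) :
    faceSign F s w * faceSign F (s.erase w) u = -(faceSign F s u * faceSign F (s.erase u) w) := by
  rcases hne.lt_or_gt with h | h
  · rw [faceSign_erase_of_lt F hw h, faceSign_erase_of_not_lt F h.not_gt]; ring
  · rw [faceSign_erase_of_lt F hu h, faceSign_erase_of_not_lt F h.not_gt]; ring

noncomputable def bdryLinear : (Finset W →₀ F) →ₗ[F] Finset W →₀ F :=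
  Finsupp.linearCombination F fun s => ∑ w ∈ s, faceSign F s w • Finsupp.single (s.erase w) 1

lemma bdryLinear_apply (x : Finset W →₀ F) : bdryLinear F x = bdry F x := by
  simp only [bdryLinear, bdry, Finsupp.linearCombination_apply, faceSign, smul_sum, smul_smul]

lemma bdry_add (x y : Finset W →₀ F) : bdry F (x + y) = bdry F x + bdry F y := by
  simp only [← bdryLinear_apply, map_add]

lemma bdry_sub (x y : Finset W →₀ F) : bdry F (x - y) = bdry F x - bdry F y := by
  simp only [← bdryLinear_apply, map_sub]

lemma bdryLinear_comp_self :
    bdryLinear F ∘ₗ bdryLinear F = (0 : (Finset W →₀ F) →ₗ[F] _) := by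
  ext s : 2
  simp only [LinearMap.comp_apply, Finsupp.lsingle_apply, bdryLinear,
    Finsupp.linearCombination_single, map_sum, map_smul, smul_sum, smul_smul, one_mul, sum_sigma',
    LinearMap.zero_apply]
  refine sum_involution (fun p _ => ⟨p.2, p.1⟩) (fun ⟨w, u⟩ hp => ?_)
    (fun ⟨w, u⟩ hp _ => ?_) (fun ⟨w, u⟩ hp => ?_) (fun _ _ => rfl)
  · simp only [mem_sigma, mem_erase] at hp
    rw [faceSign_mul_faceSign_erase_swap F hp.1 hp.2.2 hp.2.1.symm, erase_right_comm, neg_smul,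
      neg_add_cancel]
  · simp only [mem_sigma, mem_erase] at hp
    simp only [ne_eq, Sigma.ext_iff]
    exact fun h => hp.2.1 h.1
  · simp only [mem_sigma, mem_erase] at hp ⊢
    exact ⟨hp.2.2, hp.2.1.symm, hp.1⟩

lemma bdry_bdry (x : Finset W →₀ F) : bdry F (bdry F x) = 0 := by
  rw [← bdryLinear_apply, ← bdryLinear_apply, ← LinearMap.comp_apply, bdryLinear_comp_self,
    LinearMap.zero_apply]

lemma exists_erase_eq_of_mem_support_bdry {x : Finset W →₀ F} {t : Finset W}
    (ht : t ∈ (bdry F x).support) : ∃ s ∈ x.support, ∃ w ∈ s, s.erase w = t := by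
  obtain ⟨s, hs, ht⟩ := mem_biUnion.1 (Finsupp.support_sum ht)
  obtain ⟨w, hw, ht⟩ := mem_biUnion.1 (Finsupp.support_finsetSum ht)
  exact ⟨s, hs, w, hw,
    (mem_singleton.1 (Finsupp.support_single_subset (Finsupp.support_smul ht))).symm⟩

section Links

variable {V : Type} {K : Finset (Finset V)} {σ : Finset V} {v : V}

lemma IsComplex.linkOf (hK : IsComplex K) (σ : Finset V) : IsComplex (linkOf K σ) := by
  intro τ hτ t ht
  simp only [_root_.linkOf, mem_filter] at hτ ⊢
  exact ⟨hK τ hτ.1 t ht, hτ.2.1.mono_left ht, hK _ hτ.2.2 _ (union_subset_union_left ht)⟩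

lemma linkOf_eq_empty (hK : IsComplex K) (hσ : σ ∉ K) : linkOf K σ = ∅ :=
  filter_false_of_mem fun _ _ hτ => hσ (hK _ hτ.2 σ subset_union_right)

lemma linkOf_filter_notMem (hv : v ∉ σ) :
    linkOf (K.filter fun s => v ∉ s) σ = (linkOf K σ).filter fun s => v ∉ s := by
  ext τ
  simp only [linkOf, mem_filter, mem_union, hv, or_false]
  tauto

lemma linkOf_linkOf_singleton (hK : IsComplex K) (hv : v ∉ σ) :
    linkOf (linkOf K σ) {v} = linkOf K (insert v σ) := by
  ext τ
  simp only [linkOf, mem_filter, disjoint_singleton_right, disjoint_insert_right,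
    disjoint_insert_left, union_singleton, insert_union, ← union_insert]
  constructor
  · rintro ⟨⟨hτK, hτσ, -⟩, hvτ, -, -, h⟩
    exact ⟨hτK, ⟨hvτ, hτσ⟩, h⟩
  · rintro ⟨hτK, ⟨hvτ, hτσ⟩, h⟩
    exact ⟨⟨hτK, hτσ, hK _ h _ (union_subset_union_right (subset_insert v σ))⟩, hvτ,
      hK _ h _ (insert_subset (mem_union_right _ (mem_insert_self v σ)) subset_union_left),
      ⟨hv, hτσ⟩, h⟩

end Links

lemma vanishesAt_empty (d : ℕ) : VanishesAt F (∅ : Finset (Finset W)) d := by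
  intro x hx _
  obtain rfl : x = 0 := Finsupp.support_eq_empty.1 <|
    eq_empty_of_forall_notMem fun t ht => notMem_empty t (hx t ht).1
  exact ⟨0, by simp, by rw [← bdryLinear_apply, map_zero]⟩

lemma IsComplex.vanishesAt_linkOf {K : Finset (Finset W)} (hK : IsComplex K) {σ : Finset W}
    {d : ℕ} (h : σ ∈ K → VanishesAt F (_root_.linkOf K σ) d) :
    VanishesAt F (_root_.linkOf K σ) d := by
  by_cases hσ : σ ∈ K
  · exact h hσ
  · rw [_root_.linkOf_eq_empty hK hσ]
    exact vanishesAt_empty F d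

theorem VanishesAt.filter_notMem {L : Finset (Finset W)} (hL : IsComplex L) {d : ℕ} {v : W}
    (h : VanishesAt F L d) (hv : VanishesAt F (linkOf L {v}) d) :
    VanishesAt F (L.filter fun s => v ∉ s) d := by
  intro x hx hcyc
  obtain ⟨y, hy, rfl⟩ := h x (fun s hs => ⟨(mem_filter.1 (hx s hs).1).1, (hx s hs).2⟩) hcyc
  set y₀ := y.filter fun s => v ∉ s
  set y₁ := y.filter fun s => v ∈ s
  have hy₁₀ : y₁ + y₀ = y := Finsupp.filter_add_filter_not y _
  have hz : ∀ t ∈ (bdry F y₁).support, t ∈ linkOf L {v} ∧ #t = d + 1 := by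
    intro t ht
    have hvt : v ∉ t := by
      rw [← add_sub_cancel_right y₁ y₀, hy₁₀, bdry_sub] at ht
      rcases mem_union.1 (Finsupp.support_sub ht) with ht | ht
      · exact (mem_filter.1 (hx t ht).1).2
      · obtain ⟨s, hs, w, -, rfl⟩ := exists_erase_eq_of_mem_support_bdry F ht
        rw [Finsupp.support_filter, mem_filter] at hs
        exact fun hvs => hs.2 (mem_of_mem_erase hvs)
    obtain ⟨s, hs, w, hw, rfl⟩ := exists_erase_eq_of_mem_support_bdry F ht
    rw [Finsupp.support_filter, mem_filter] at hs
    obtain rfl : v = w := by_contra fun hvw => hvt (mem_erase.2 ⟨hvw, hs.2⟩)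
    obtain ⟨hsL, hcard⟩ := hy s hs.1
    refine ⟨mem_filter.2 ⟨hL s hsL _ (erase_subset v s), disjoint_singleton_right.2 hvt, ?_⟩,
      by rw [card_erase_of_mem hw, hcard]; rfl⟩
    rwa [union_singleton, insert_erase hw]
  obtain ⟨w, hw, hbw⟩ := hv _ hz (bdry_bdry F y₁)
  refine ⟨y₀ + w, fun u hu => ?_, by rw [bdry_add, hbw, ← bdry_add, add_comm, hy₁₀]⟩
  rcases mem_union.1 (Finsupp.support_add hu) with hu | hu
  · rw [Finsupp.support_filter, mem_filter] at hu
    exact ⟨mem_filter.2 ⟨(hy u hu.1).1, hu.2⟩, (hy u hu.1).2⟩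
  · obtain ⟨hu, hcard⟩ := hw u hu
    simp only [linkOf, mem_filter, disjoint_singleton_right] at hu
    exact ⟨mem_filter.2 ⟨hu.1, hu.2.1⟩, hcard⟩

/-- If every link of a non-empty face of `K` has vanishing reduced homology in all
dimensions `≥ d₀`, then the same holds for the induced subcomplex `K - v`
obtained by deleting a vertex `v`. -/
theorem link_vanishing_hereditary {W : Type} [LinearOrder W] (F : Type) [Field F]
    (K : Finset (Finset W)) (hK : IsComplex K) (d₀ : ℕ)
    (h : ∀ σ ∈ K, σ ≠ ∅ → ∀ d, d₀ ≤ d → VanishesAt F (linkOf K σ) d)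
    (v : W) :
    ∀ σ ∈ K.filter fun s => v ∉ s, σ ≠ (∅ : Finset W) →
      ∀ d, d₀ ≤ d → VanishesAt F (linkOf (K.filter fun s => v ∉ s) σ) d := by
  intro σ hσ hσne d hd
  obtain ⟨hσK, hvσ⟩ := mem_filter.1 hσ
  rw [linkOf_filter_notMem hvσ]
  refine (h σ hσK hσne d hd).filter_notMem F (hK.linkOf σ) ?_
  rw [linkOf_linkOf_singleton hK hvσ]
  exact hK.vanishesAt_linkOf F fun hvσK => h _ hvσK (insert_ne_empty v σ) d hd
end

section
/- Let E be a finite set partitioned as E = E₁ ∪ ⋯ ∪ E_m, and for each i let F_i ⊆ 2^{E_i} be a non-empty family with an acyclic element matching M_i whose set of critical sets is U_i. Then the join F₁ * ⋯ * F_m = {σ₁ ∪ ⋯ ∪ σ_m : σ_i ∈ F_i} admits an acyclic element matching whose critical sets are exactly U₁ * ⋯ * U_m. In particular, if some M_i is a complete matching, then the join has a complete acyclic matching. -/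
attribute [local instance] Classical.propDecidable

variable {α : Type} [DecidableEq α]

/-- An element matching on a family `F` of finite sets: a set `M` of pairs `(σ, τ)` with
`σ ⊊ τ`, `|τ \ σ| = 1`, each member of `F` appearing in at most one pair. -/
def IsElemMatching (F : Set (Finset α)) (M : Set (Finset α × Finset α)) : Prop :=
  (∀ p ∈ M, p.1 ∈ F ∧ p.2 ∈ F ∧ p.1 ⊂ p.2 ∧ (p.2 \ p.1).card = 1) ∧
  ∀ p ∈ M, ∀ q ∈ M, p ≠ q → p.1 ≠ q.1 ∧ p.1 ≠ q.2 ∧ p.2 ≠ q.1 ∧ p.2 ≠ q.2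

/-- The edge relation of the digraph `D(F, M)`: matched covers are oriented upwards,
unmatched covers downwards. -/
def MorseEdge (F : Set (Finset α)) (M : Set (Finset α × Finset α)) (σ τ : Finset α) : Prop :=
  σ ∈ F ∧ τ ∈ F ∧ ((σ, τ) ∈ M ∨ (τ ⊂ σ ∧ (σ \ τ).card = 1 ∧ (τ, σ) ∉ M))

/-- The element matching `M` is acyclic: the digraph `D(F, M)` has no directed cycle. -/
def MorseAcyclic (F : Set (Finset α)) (M : Set (Finset α × Finset α)) : Prop :=
  ∀ σ, ¬ Relation.TransGen (MorseEdge F M) σ σ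

/-- A member of `F` is critical for `M` if it appears in no pair of `M`. -/
def MorseCritical (F : Set (Finset α)) (M : Set (Finset α × Finset α)) (σ : Finset α) : Prop :=
  σ ∈ F ∧ ∀ p ∈ M, σ ≠ p.1 ∧ σ ≠ p.2

/-- The join of families `F i ⊆ 2^{E i}`. -/
def joinFam {m : ℕ} (Fam : Fin m → Set (Finset α)) : Set (Finset α) :=
  {σ | ∃ g : Fin m → Finset α, (∀ i, g i ∈ Fam i) ∧ σ = Finset.univ.biUnion g}

set_option linter.unusedSectionVars false

section JoinAux

variable {m : ℕ} {E : Fin m → Finset α} {Fam : Fin m → Set (Finset α)}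
  {M : Fin m → Set (Finset α × Finset α)}

/-- The matching on the join: match along the first non-critical coordinate. -/
def joinN (E : Fin m → Finset α) (Fam : Fin m → Set (Finset α))
    (M : Fin m → Set (Finset α × Finset α)) : Set (Finset α × Finset α) :=
  {p | p.1 ∈ joinFam Fam ∧ p.2 ∈ joinFam Fam ∧ ∃ i : Fin m,
      (∀ j, j < i → MorseCritical (Fam j) (M j) (p.1 ∩ E j)) ∧
      (p.1 ∩ E i, p.2 ∩ E i) ∈ M i ∧ ∀ j, j ≠ i → p.1 ∩ E j = p.2 ∩ E j}

lemma coord_biUnion (hdisj : ∀ i j, i ≠ j → Disjoint (E i) (E j))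
    {g : Fin m → Finset α} (hg : ∀ j, g j ⊆ E j) (i : Fin m) :
    (Finset.univ.biUnion g) ∩ E i = g i := by
  ext a
  simp only [Finset.mem_inter, Finset.mem_biUnion, Finset.mem_univ, true_and]
  constructor
  · rintro ⟨⟨j, hj⟩, hai⟩
    rcases eq_or_ne j i with rfl | hne
    · exact hj
    · exact absurd hai (Finset.disjoint_left.mp (hdisj j i hne) (hg j hj))
  · exact fun h => ⟨⟨i, h⟩, hg i h⟩

lemma join_coord (hdisj : ∀ i j, i ≠ j → Disjoint (E i) (E j))
    (hFE : ∀ i, ∀ σ ∈ Fam i, σ ⊆ E i) {σ : Finset α}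
    (hσ : σ ∈ joinFam Fam) (i : Fin m) : σ ∩ E i ∈ Fam i := by
  obtain ⟨g, hg, rfl⟩ := hσ
  rw [coord_biUnion hdisj (fun j => hFE j _ (hg j)) i]
  exact hg i

lemma join_eq_biUnion (hdisj : ∀ i j, i ≠ j → Disjoint (E i) (E j))
    (hFE : ∀ i, ∀ σ ∈ Fam i, σ ⊆ E i) {σ : Finset α}
    (hσ : σ ∈ joinFam Fam) :
    σ = Finset.univ.biUnion (fun i => σ ∩ E i) := by
  obtain ⟨g, hg, rfl⟩ := hσ
  exact Finset.biUnion_congr rfl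
    (fun i _ => (coord_biUnion hdisj (fun j => hFE j _ (hg j)) i).symm)

lemma join_ext (hdisj : ∀ i j, i ≠ j → Disjoint (E i) (E j))
    (hFE : ∀ i, ∀ σ ∈ Fam i, σ ⊆ E i) {σ τ : Finset α}
    (hσ : σ ∈ joinFam Fam) (hτ : τ ∈ joinFam Fam)
    (h : ∀ i, σ ∩ E i = τ ∩ E i) : σ = τ := by
  rw [join_eq_biUnion hdisj hFE hσ, join_eq_biUnion hdisj hFE hτ]
  exact Finset.biUnion_congr rfl (fun i _ => h i)

lemma not_critical_iff {F : Set (Finset α)} {Mm : Set (Finset α × Finset α)} {σ : Finset α}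
    (hσ : σ ∈ F) : ¬ MorseCritical F Mm σ ↔ ∃ p ∈ Mm, σ = p.1 ∨ σ = p.2 := by
  constructor
  · intro h
    by_contra hc
    push_neg at hc
    exact h ⟨hσ, hc⟩
  · rintro ⟨p, hp, h⟩ ⟨_, hcrit⟩
    rcases h with h | h
    exacts [(hcrit p hp).1 h, (hcrit p hp).2 h]

lemma sdiff_coord (hdisj : ∀ i j, i ≠ j → Disjoint (E i) (E j))
    (hFE : ∀ i, ∀ σ ∈ Fam i, σ ⊆ E i) {σ τ : Finset α}
    (hσ : σ ∈ joinFam Fam) (i : Fin m)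
    (h : ∀ j, j ≠ i → σ ∩ E j = τ ∩ E j) : σ \ τ = (σ ∩ E i) \ (τ ∩ E i) := by
  ext a
  simp only [Finset.mem_sdiff, Finset.mem_inter]
  constructor
  · rintro ⟨haσ, haτ⟩
    obtain ⟨j, haj⟩ : ∃ j, a ∈ σ ∩ E j := by
      have hb := join_eq_biUnion hdisj hFE hσ
      rw [hb] at haσ
      simpa using haσ
    rcases eq_or_ne j i with rfl | hne
    · exact ⟨Finset.mem_inter.mp haj, fun h2 => haτ h2.1⟩
    · exact absurd ((h j hne) ▸ haj) (fun h2 => haτ (Finset.mem_inter.mp h2).1)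
  · rintro ⟨⟨h1, h2⟩, h3⟩
    exact ⟨h1, fun haτ => h3 ⟨haτ, h2⟩⟩

end JoinAux

section JoinAux2

variable {m : ℕ} {E : Fin m → Finset α} {Fam : Fin m → Set (Finset α)}
  {M : Fin m → Set (Finset α × Finset α)}

lemma joinN_pair_spec (hdisj : ∀ i j, i ≠ j → Disjoint (E i) (E j))
    (hFE : ∀ i, ∀ σ ∈ Fam i, σ ⊆ E i)
    (hM : ∀ i, IsElemMatching (Fam i) (M i)) {p : Finset α × Finset α}
    (hp : p ∈ joinN E Fam M) : p.1 ⊂ p.2 ∧ (p.2 \ p.1).card = 1 := by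
  obtain ⟨h1, h2, i, hc1, hpair, hcoords⟩ := hp
  have hMfact := (hM i).1 _ hpair
  have hd1 : p.2 \ p.1 = (p.2 ∩ E i) \ (p.1 ∩ E i) :=
    sdiff_coord hdisj hFE h2 i (fun j hj => (hcoords j hj).symm)
  have hd2 : p.1 \ p.2 = (p.1 ∩ E i) \ (p.2 ∩ E i) :=
    sdiff_coord hdisj hFE h1 i hcoords
  have hsub : p.1 ⊆ p.2 := by
    rw [← Finset.sdiff_eq_empty_iff_subset, hd2, Finset.sdiff_eq_empty_iff_subset]
    exact hMfact.2.2.1.subset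
  have hne : p.1 ≠ p.2 := fun he => hMfact.2.2.1.ne (by rw [he])
  exact ⟨lt_iff_le_and_ne.mpr ⟨hsub, hne⟩, by rw [hd1]; exact hMfact.2.2.2⟩

lemma first_unique {σ : Finset α} {i i' : Fin m}
    (h1 : ∀ j, j < i → MorseCritical (Fam j) (M j) (σ ∩ E j))
    (h2 : ∃ p ∈ M i, σ ∩ E i = p.1 ∨ σ ∩ E i = p.2)
    (h1' : ∀ j, j < i' → MorseCritical (Fam j) (M j) (σ ∩ E j))
    (h2' : ∃ p ∈ M i', σ ∩ E i' = p.1 ∨ σ ∩ E i' = p.2) : i = i' := by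
  rcases lt_trichotomy i i' with h | h | h
  · obtain ⟨p, hp, hor⟩ := h2
    have hc := (h1' i h).2 p hp
    rcases hor with he | he
    exacts [(hc.1 he).elim, (hc.2 he).elim]
  · exact h
  · obtain ⟨p, hp, hor⟩ := h2'
    have hc := (h1 i' h).2 p hp
    rcases hor with he | he
    exacts [(hc.1 he).elim, (hc.2 he).elim]

lemma joinN_isMatching (hdisj : ∀ i j, i ≠ j → Disjoint (E i) (E j))
    (hFE : ∀ i, ∀ σ ∈ Fam i, σ ⊆ E i)
    (hM : ∀ i, IsElemMatching (Fam i) (M i)) :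
    IsElemMatching (joinFam Fam) (joinN E Fam M) := by
  constructor
  · intro p hp
    exact ⟨hp.1, hp.2.1, joinN_pair_spec hdisj hFE hM hp⟩
  · intro p hp q hq hpq
    obtain ⟨hp1, hp2, i, hc1, hpair, hcoords⟩ := hp
    obtain ⟨hq1, hq2, i', hc1', hpair', hcoords'⟩ := hq
    -- criticality of second components below the matched coordinate
    have hc2 : ∀ j, j < i → MorseCritical (Fam j) (M j) (p.2 ∩ E j) :=
      fun j hj => (hcoords j hj.ne) ▸ hc1 j hj
    have hc2' : ∀ j, j < i' → MorseCritical (Fam j) (M j) (q.2 ∩ E j) :=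
      fun j hj => (hcoords' j hj.ne) ▸ hc1' j hj
    refine ⟨?_, ?_, ?_, ?_⟩
    · -- p.1 ≠ q.1
      intro he
      have hii : i = i' := first_unique hc1 ⟨_, hpair, Or.inl rfl⟩
        (he ▸ hc1') ⟨_, he ▸ hpair', Or.inl (by rw [he])⟩
      subst hii
      rw [he] at hpair
      have hPQ : ((q.1 ∩ E i, p.2 ∩ E i) : Finset α × Finset α) = (q.1 ∩ E i, q.2 ∩ E i) := by
        by_contra hne
        exact ((hM i).2 _ hpair _ hpair' hne).1 rfl
      have h2i : p.2 ∩ E i = q.2 ∩ E i := congrArg Prod.snd hPQ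
      have h22 : p.2 = q.2 := by
        apply join_ext hdisj hFE hp2 hq2
        intro j
        rcases eq_or_ne j i with rfl | hne
        · exact h2i
        · rw [← hcoords j hne, ← hcoords' j hne, he]
      exact hpq (Prod.ext he h22)
    · -- p.1 ≠ q.2
      intro he
      have hii : i = i' := first_unique hc1 ⟨_, hpair, Or.inl rfl⟩
        (he ▸ hc2') ⟨_, hpair', Or.inr (by rw [he])⟩
      subst hii
      rcases eq_or_ne ((p.1 ∩ E i, p.2 ∩ E i) : Finset α × Finset α)
          ((q.1 ∩ E i, q.2 ∩ E i) : Finset α × Finset α) with hPQ | hPQ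
      · have h1 : p.1 ∩ E i = q.1 ∩ E i := congrArg Prod.fst hPQ
        have h2 : p.1 ∩ E i = q.2 ∩ E i := by rw [he]
        have : q.1 ∩ E i = q.2 ∩ E i := by rw [← h1, h2]
        exact ((hM i).1 _ hpair').2.2.1.ne this
      · exact ((hM i).2 _ hpair _ hpair' hPQ).2.1 (by rw [he])
    · -- p.2 ≠ q.1
      intro he
      have hii : i = i' := first_unique hc2 ⟨_, hpair, Or.inr rfl⟩
        (he ▸ hc1') ⟨_, hpair', Or.inl (by rw [he])⟩
      subst hii
      rcases eq_or_ne ((p.1 ∩ E i, p.2 ∩ E i) : Finset α × Finset α)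
          ((q.1 ∩ E i, q.2 ∩ E i) : Finset α × Finset α) with hPQ | hPQ
      · have h2 : p.2 ∩ E i = q.2 ∩ E i := congrArg Prod.snd hPQ
        have : q.1 ∩ E i = q.2 ∩ E i := by rw [← he, h2]
        exact ((hM i).1 _ hpair').2.2.1.ne this
      · exact ((hM i).2 _ hpair _ hpair' hPQ).2.2.1 (by rw [he])
    · -- p.2 ≠ q.2
      intro he
      have hii : i = i' := first_unique hc2 ⟨_, hpair, Or.inr rfl⟩
        (he ▸ hc2') ⟨_, hpair', Or.inr (by rw [he])⟩
      subst hii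
      have hPQ : ((p.1 ∩ E i, p.2 ∩ E i) : Finset α × Finset α) = (q.1 ∩ E i, q.2 ∩ E i) := by
        by_contra hne
        exact ((hM i).2 _ hpair _ hpair' hne).2.2.2 (by rw [he])
      have h1i : p.1 ∩ E i = q.1 ∩ E i := congrArg Prod.fst hPQ
      have h11 : p.1 = q.1 := by
        apply join_ext hdisj hFE hp1 hq1
        intro j
        rcases eq_or_ne j i with rfl | hne
        · exact h1i
        · rw [hcoords j hne, hcoords' j hne, he]
      exact hpq (Prod.ext h11 he)

end JoinAux2

section JoinAux3

variable {m : ℕ} {E : Fin m → Finset α} {Fam : Fin m → Set (Finset α)}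
  {M : Fin m → Set (Finset α × Finset α)}

lemma joinN_critical_iff (hdisj : ∀ i j, i ≠ j → Disjoint (E i) (E j))
    (hFE : ∀ i, ∀ σ ∈ Fam i, σ ⊆ E i)
    (hM : ∀ i, IsElemMatching (Fam i) (M i)) (σ : Finset α) :
    MorseCritical (joinFam Fam) (joinN E Fam M) σ ↔
      ∃ g : Fin m → Finset α, (∀ i, MorseCritical (Fam i) (M i) (g i)) ∧
        σ = Finset.univ.biUnion g := by
  constructor
  · rintro ⟨hσJ, hcrit⟩
    refine ⟨fun i => σ ∩ E i, ?_, join_eq_biUnion hdisj hFE hσJ⟩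
    intro i
    by_contra hnc
    have hSne : (Finset.univ.filter
        (fun j : Fin m => ¬ MorseCritical (Fam j) (M j) (σ ∩ E j))).Nonempty :=
      ⟨i, Finset.mem_filter.mpr ⟨Finset.mem_univ i, hnc⟩⟩
    set S := Finset.univ.filter
        (fun j : Fin m => ¬ MorseCritical (Fam j) (M j) (σ ∩ E j)) with hS
    set i0 := S.min' hSne with hi0def
    have hi0 : ¬ MorseCritical (Fam i0) (M i0) (σ ∩ E i0) :=
      (Finset.mem_filter.mp (S.min'_mem hSne)).2
    have hlt : ∀ j, j < i0 → MorseCritical (Fam j) (M j) (σ ∩ E j) := by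
      intro j hj
      by_contra h
      exact absurd (S.min'_le j (Finset.mem_filter.mpr ⟨Finset.mem_univ j, h⟩))
        (not_le.mpr hj)
    obtain ⟨p, hpM, hor⟩ := (not_critical_iff (join_coord hdisj hFE hσJ i0)).mp hi0
    have hp1F : p.1 ∈ Fam i0 := ((hM i0).1 p hpM).1
    have hp2F : p.2 ∈ Fam i0 := ((hM i0).1 p hpM).2.1
    rcases hor with he | he
    · -- σ ∩ E i0 = p.1 : σ is the lower element, match upwards with p.2
      set τ := Finset.univ.biUnion (fun j => if j = i0 then p.2 else σ ∩ E j) with hτ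
      have hsubs : ∀ j, (if j = i0 then p.2 else σ ∩ E j) ⊆ E j := by
        intro j
        rcases eq_or_ne j i0 with rfl | hne
        · simpa using hFE _ _ hp2F
        · simp only [if_neg hne]
          exact Finset.inter_subset_right
      have hτcoord : ∀ j, τ ∩ E j = if j = i0 then p.2 else σ ∩ E j :=
        fun j => coord_biUnion hdisj hsubs j
      have hτJ : τ ∈ joinFam Fam := by
        refine ⟨_, ?_, rfl⟩
        intro j
        rcases eq_or_ne j i0 with rfl | hne
        · simpa using hp2F
        · simp only [if_neg hne]
          exact join_coord hdisj hFE hσJ j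
      have hmemN : (σ, τ) ∈ joinN E Fam M := by
        refine ⟨hσJ, hτJ, i0, hlt, ?_, ?_⟩
        · show (σ ∩ E i0, τ ∩ E i0) ∈ M i0
          rw [hτcoord i0, if_pos rfl, he]
          exact hpM
        · intro j hji
          rw [hτcoord j, if_neg hji]
      exact (hcrit (σ, τ) hmemN).1 rfl
    · -- σ ∩ E i0 = p.2 : σ is the upper element
      set τ := Finset.univ.biUnion (fun j => if j = i0 then p.1 else σ ∩ E j) with hτ
      have hsubs : ∀ j, (if j = i0 then p.1 else σ ∩ E j) ⊆ E j := by
        intro j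
        rcases eq_or_ne j i0 with rfl | hne
        · simpa using hFE _ _ hp1F
        · simp only [if_neg hne]
          exact Finset.inter_subset_right
      have hτcoord : ∀ j, τ ∩ E j = if j = i0 then p.1 else σ ∩ E j :=
        fun j => coord_biUnion hdisj hsubs j
      have hτJ : τ ∈ joinFam Fam := by
        refine ⟨_, ?_, rfl⟩
        intro j
        rcases eq_or_ne j i0 with rfl | hne
        · simpa using hp1F
        · simp only [if_neg hne]
          exact join_coord hdisj hFE hσJ j
      have hmemN : (τ, σ) ∈ joinN E Fam M := by
        refine ⟨hτJ, hσJ, i0, ?_, ?_, ?_⟩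
        · intro j hj
          show MorseCritical (Fam j) (M j) (τ ∩ E j)
          rw [hτcoord j, if_neg hj.ne]
          exact hlt j hj
        · show (τ ∩ E i0, σ ∩ E i0) ∈ M i0
          rw [hτcoord i0, if_pos rfl, he]
          exact hpM
        · intro j hji
          rw [hτcoord j, if_neg hji]
      exact (hcrit (τ, σ) hmemN).2 rfl
  · rintro ⟨g, hg, rfl⟩
    have hgsub : ∀ j, g j ⊆ E j := fun j => hFE j _ (hg j).1
    have hco : ∀ j, (Finset.univ.biUnion g) ∩ E j = g j := coord_biUnion hdisj hgsub
    refine ⟨⟨g, fun j => (hg j).1, rfl⟩, ?_⟩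
    rintro p ⟨hp1, hp2, i', hc1', hpair', hcoords'⟩
    constructor
    · intro he
      exact ((hg i').2 _ hpair').1 (by rw [← hco i', he])
    · intro he
      exact ((hg i').2 _ hpair').2 (by rw [← hco i', he])
end JoinAux3

section JoinAux4

theorem path_of_transGen {β : Type} {r : β → β → Prop} {a b : β} (h : Relation.TransGen r a b) :
    ∃ n : ℕ, ∃ f : ℕ → β, 0 < n ∧ f 0 = a ∧ f n = b ∧ ∀ k, k < n → r (f k) (f (k+1)) := by
  induction h with
  | @single c h =>
      refine ⟨1, fun k => if k = 0 then a else c, Nat.one_pos, rfl, rfl, ?_⟩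
      intro k hk
      have : k = 0 := by omega
      subst this
      simpa using h
  | @tail c d _ hcd ih =>
      obtain ⟨n, f, hn, h0, hnb, hstep⟩ := ih
      refine ⟨n+1, fun k => if k ≤ n then f k else d, Nat.succ_pos n, ?_, ?_, ?_⟩
      · simp [h0]
      · simp
      · intro k hk
        rcases Nat.lt_or_ge k n with h1 | h1
        · simp only [if_pos (Nat.le_of_lt h1), if_pos (Nat.succ_le_of_lt h1)]
          exact hstep k h1
        · have hkn : k = n := by omega
          subst hkn
          simp only [if_pos (le_refl k), if_neg (Nat.not_succ_le_self k)]
          rw [hnb]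
          exact hcd

variable {m : ℕ} {E : Fin m → Finset α} {Fam : Fin m → Set (Finset α)}
  {M : Fin m → Set (Finset α × Finset α)}

lemma joinN_acyclic (hdisj : ∀ i j, i ≠ j → Disjoint (E i) (E j))
    (hFE : ∀ i, ∀ σ ∈ Fam i, σ ⊆ E i)
    (hM : ∀ i, IsElemMatching (Fam i) (M i) ∧ MorseAcyclic (Fam i) (M i)) :
    MorseAcyclic (joinFam Fam) (joinN E Fam M) := by
  intro σ hcyc
  obtain ⟨n, f, hn, hf0, hfn, hstep⟩ := path_of_transGen hcyc
  have hjoin : ∀ k, k ≤ n → f k ∈ joinFam Fam := by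
    intro k hk
    rcases eq_or_lt_of_le hk with rfl | hk'
    · rw [hfn, ← hf0]
      exact (hstep 0 hn).1
    · exact (hstep k hk').1
  -- helper: coords of an erased set
  have coord_erase : ∀ (x : Finset α) (a : α) (j : Fin m), a ∉ E j →
      (x \ {a}) ∩ E j = x ∩ E j := by
    intro x a j haj
    ext b
    simp only [Finset.mem_inter, Finset.mem_sdiff, Finset.mem_singleton]
    constructor
    · rintro ⟨⟨h1, _⟩, h3⟩
      exact ⟨h1, h3⟩
    · rintro ⟨h1, h3⟩
      exact ⟨⟨h1, fun hbe => haj (hbe ▸ h3)⟩, h3⟩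
  have coord_erase_mem : ∀ (x : Finset α) (a : α) (j : Fin m),
      (x \ {a}) ∩ E j = (x ∩ E j) \ {a} := by
    intro x a j
    ext b
    simp only [Finset.mem_inter, Finset.mem_sdiff, Finset.mem_singleton]
    tauto
  by_cases hC : (Finset.univ.filter
      (fun i : Fin m => ∃ k, k < n ∧ f k ∩ E i ≠ f (k+1) ∩ E i)).Nonempty
  case neg =>
    -- no coordinate ever changes: self-loop, impossible
    have hall : f 0 = f 1 := by
      apply join_ext hdisj hFE (hjoin 0 (by omega)) (hjoin 1 hn)
      intro i
      by_contra hne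
      exact hC ⟨i, Finset.mem_filter.mpr ⟨Finset.mem_univ i, 0, hn, hne⟩⟩
    have hloop : MorseEdge (joinFam Fam) (joinN E Fam M) (f 0) (f 0) := by
      have h := hstep 0 hn
      rwa [← hall] at h
    rcases hloop.2.2 with hN | ⟨hss, _, _⟩
    · obtain ⟨_, _, i', _, hpair', _⟩ := hN
      exact ((hM i').1.1 _ hpair').2.2.1.ne rfl
    · exact hss.ne rfl
  case pos =>
    set C := Finset.univ.filter
      (fun i : Fin m => ∃ k, k < n ∧ f k ∩ E i ≠ f (k+1) ∩ E i) with hCdef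
    set i := C.min' hC with hidef
    have hmin : ∀ j, j < i → ∀ k, k < n → f k ∩ E j = f (k+1) ∩ E j := by
      intro j hj k hk
      by_contra h
      exact absurd (C.min'_le j (Finset.mem_filter.mpr ⟨Finset.mem_univ j, k, hk, h⟩))
        (not_le.mpr hj)
    have hconst : ∀ j, j < i → ∀ k, k ≤ n → f k ∩ E j = f 0 ∩ E j := by
      intro j hj k
      induction k with
      | zero => intro _; rfl
      | succ k ih =>
          intro hk
          rw [← hmin j hj k (by omega)]
          exact ih (by omega)
    obtain ⟨k0, hk0, hne0⟩ : ∃ k, k < n ∧ f k ∩ E i ≠ f (k+1) ∩ E i :=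
      (Finset.mem_filter.mp (C.min'_mem hC)).2
    by_cases hcritlt : ∀ j, j < i → MorseCritical (Fam j) (M j) (f 0 ∩ E j)
    · -- Case A: every step projects to an edge (or identity) in D(F_i, M_i)
      have key : ∀ k, k < n → f k ∩ E i = f (k+1) ∩ E i ∨
          MorseEdge (Fam i) (M i) (f k ∩ E i) (f (k+1) ∩ E i) := by
        intro k hk
        have hx := hjoin k (le_of_lt hk)
        have hy := hjoin (k+1) hk
        rcases (hstep k hk).2.2 with hN | ⟨hss, hcard1, hnotN⟩
        · obtain ⟨_, _, i', hcrit', hpair', hcoords'⟩ := hN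
          rcases eq_or_ne i' i with rfl | hne
          · exact Or.inr ⟨join_coord hdisj hFE hx _, join_coord hdisj hFE hy _,
              Or.inl hpair'⟩
          · exact Or.inl (hcoords' i (Ne.symm hne))
        · -- down edge
          obtain ⟨a, ha⟩ := Finset.card_eq_one.mp hcard1
          have hysub : f (k+1) = f k \ {a} := by
            rw [← ha, Finset.sdiff_sdiff_self_left,
              Finset.inter_eq_right.mpr hss.subset]
          have haf : a ∈ f k := by
            have : a ∈ f k \ f (k+1) := ha ▸ Finset.mem_singleton_self a
            exact (Finset.mem_sdiff.mp this).1
          by_cases hai : a ∈ E i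
          · right
            have hyEi : f (k+1) ∩ E i = (f k ∩ E i) \ {a} := by
              rw [hysub, coord_erase_mem]
            have haxi : a ∈ f k ∩ E i := Finset.mem_inter.mpr ⟨haf, hai⟩
            refine ⟨join_coord hdisj hFE hx i, join_coord hdisj hFE hy i,
              Or.inr ⟨?_, ?_, ?_⟩⟩
            · rw [hyEi]
              exact Finset.sdiff_ssubset (Finset.singleton_subset_iff.mpr haxi)
                (Finset.singleton_nonempty a)
            · rw [hyEi, Finset.sdiff_sdiff_self_left,
                Finset.inter_singleton_of_mem haxi, Finset.card_singleton]
            · intro hmem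
              apply hnotN
              refine ⟨hy, hx, i, ?_, ?_, ?_⟩
              · intro j hjlt
                have h0 : f (k+1) ∩ E j = f 0 ∩ E j := hconst j hjlt (k+1) hk
                rw [h0]
                exact hcritlt j hjlt
              · exact hmem
              · intro j hji
                rw [hysub, coord_erase _ _ _
                  (Finset.disjoint_left.mp (hdisj i j (Ne.symm hji)) hai)]
          · left
            rw [hysub, coord_erase _ _ _ hai]
      have rtg : ∀ l, l ≤ n → ∀ k, k ≤ l → Relation.ReflTransGen
          (MorseEdge (Fam i) (M i)) (f k ∩ E i) (f l ∩ E i) := by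
        intro l
        induction l with
        | zero =>
            intro _ k hk
            have : k = 0 := by omega
            subst this
            exact Relation.ReflTransGen.refl
        | succ l ih =>
            intro hl k hk
            rcases eq_or_lt_of_le hk with rfl | h
            · exact Relation.ReflTransGen.refl
            · have h1 := ih (by omega) k (by omega)
              rcases key l (by omega) with he | hedge
              · rw [← he]
                exact h1
              · exact h1.tail hedge
      have hedge0 : MorseEdge (Fam i) (M i) (f k0 ∩ E i) (f (k0+1) ∩ E i) :=
        (key k0 hk0).resolve_left hne0
      have t1 : Relation.ReflTransGen (MorseEdge (Fam i) (M i))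
          (f 0 ∩ E i) (f k0 ∩ E i) := rtg k0 (le_of_lt hk0) 0 (by omega)
      have t2 : Relation.ReflTransGen (MorseEdge (Fam i) (M i))
          (f (k0+1) ∩ E i) (f n ∩ E i) := rtg n le_rfl (k0+1) (by omega)
      have tg : Relation.TransGen (MorseEdge (Fam i) (M i))
          (f 0 ∩ E i) (f n ∩ E i) :=
        Relation.TransGen.trans_right t1 (Relation.TransGen.head' hedge0 t2)
      have hfn0 : f n = f 0 := hfn.trans hf0.symm
      rw [hfn0] at tg
      exact (hM i).2 _ tg
    · -- Case B: some coordinate below i is non-critical: all edges go down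
      push_neg at hcritlt
      obtain ⟨j, hj, hjnc⟩ := hcritlt
      obtain ⟨p, hpM, hpor⟩ := (not_critical_iff
        (join_coord hdisj hFE (hjoin 0 (by omega)) j)).mp hjnc
      have hdown : ∀ k, k < n → f (k+1) ⊂ f k := by
        intro k hk
        rcases (hstep k hk).2.2 with hN | ⟨hss, _, _⟩
        · exfalso
          obtain ⟨_, _, i', hcrit', hpair', hcoords'⟩ := hN
          have hi'j : ¬ j < i' := by
            intro hlt
            have hcr := hcrit' j hlt
            rw [hconst j hj k (le_of_lt hk)] at hcr
            rcases hpor with he | he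
            exacts [(hcr.2 p hpM).1 he, (hcr.2 p hpM).2 he]
          have hchange : f k ∩ E i' ≠ f (k+1) ∩ E i' :=
            ((hM i').1.1 _ hpair').2.2.1.ne
          have hiC : i' ∈ C := Finset.mem_filter.mpr ⟨Finset.mem_univ i', k, hk, hchange⟩
          have hle : i ≤ i' := C.min'_le i' hiC
          have hlt2 : i' < i := lt_of_le_of_lt (le_of_not_gt hi'j) hj
          exact absurd hlt2 (not_lt.mpr hle)
        · exact hss
      have hcard : ∀ k, k ≤ n → (f k).card + k ≤ (f 0).card := by
        intro k
        induction k with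
        | zero => intro _; omega
        | succ k ih =>
            intro hk
            have h1 := Finset.card_lt_card (hdown k (by omega))
            have h2 := ih (by omega)
            omega
      have := hcard n le_rfl
      rw [hfn, ← hf0] at this
      omega

end JoinAux4

/-- Join Lemma: given a partition `E = E₁ ∪ ⋯ ∪ E_m` and non-empty families `F_i ⊆ 2^{E_i}`
with acyclic element matchings `M_i` whose critical sets are `U_i`, the join `F₁ * ⋯ * F_m`
admits an acyclic element matching whose critical sets are exactly `U₁ * ⋯ * U_m`.
In particular, if some `M_i` is complete, the join has a complete acyclic matching. -/
theorem join_lemma {α : Type} [DecidableEq α] {m : ℕ} (E : Fin m → Finset α)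
    (hdisj : ∀ i j, i ≠ j → Disjoint (E i) (E j))
    (Fam : Fin m → Set (Finset α)) (hFE : ∀ i, ∀ σ ∈ Fam i, σ ⊆ E i)
    (hFne : ∀ i, (Fam i).Nonempty)
    (M : Fin m → Set (Finset α × Finset α))
    (hM : ∀ i, IsElemMatching (Fam i) (M i) ∧ MorseAcyclic (Fam i) (M i)) :
    ∃ N : Set (Finset α × Finset α),
      IsElemMatching (joinFam Fam) N ∧ MorseAcyclic (joinFam Fam) N ∧
      (∀ σ, MorseCritical (joinFam Fam) N σ ↔
        ∃ g : Fin m → Finset α, (∀ i, MorseCritical (Fam i) (M i) (g i)) ∧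
          σ = Finset.univ.biUnion g) ∧
      ((∃ i, ∀ σ, ¬ MorseCritical (Fam i) (M i) σ) →
        ∀ σ, ¬ MorseCritical (joinFam Fam) N σ) := by
  refine ⟨joinN E Fam M, joinN_isMatching hdisj hFE (fun i => (hM i).1),
    joinN_acyclic hdisj hFE hM,
    fun σ => joinN_critical_iff hdisj hFE (fun i => (hM i).1) σ, ?_⟩
  rintro ⟨i, hi⟩ σ hcrit
  obtain ⟨g, hg, -⟩ :=
    (joinN_critical_iff hdisj hFE (fun i => (hM i).1) σ).mp hcrit
  exact hi (g i) (hg i)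
end

section
/- Let F ⊆ 2^E be a family of subsets and e₀ ∈ E. Let F₀ = {σ : σ \ {e₀} ∈ F and σ ∪ {e₀} ∈ F} and F₁ = F \ F₀. Then F₀ admits a complete acyclic element matching M₀ (pairing σ \ {e₀} with σ ∪ {e₀}), and for any acyclic element matching M₁ on F₁, the union M₀ ∪ M₁ is an acyclic element matching on F whose critical sets are exactly the critical sets of M₁. -/
/-!
In `D(F, M₀ ∪ M₁)` no edge loses `e₀`, because deleting `e₀` from a set of `F` is always a
matched cover, and no edge raises the height `|σ| + [σ is matched upwards]`. On a directed
cycle both quantities are therefore constant, so each unmatched cover on it ends at a set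
matched upwards and starts at one that is not. A set of `F₀` cannot then lie on the cycle:
without `e₀` it could only leave along its `M₀`-edge, which adds `e₀`, and with `e₀` it could
only be entered along its `M₀`-edge. Hence the cycle is a cycle of `D(F₁, M₁)`.
-/

attribute [local instance] Classical.propDecidable

variable {α : Type} [DecidableEq α]

namespace Relation.TransGen

variable {β γ : Type*} {R : β → β → Prop} {a : β}

theorem self_restrict_of_antitone [PartialOrder γ] {m : β → γ}
    (hm : ∀ x y, R x y → m y ≤ m x) (h : TransGen R a a) :
    TransGen (fun x y => R x y ∧ m x = m y) a a := by
  have antitone_path : ∀ {x y}, TransGen R x y → m y ≤ m x := by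
    intro x y hxy
    induction hxy with
    | single hxy => exact hm _ _ hxy
    | tail _ hyz ih => exact (hm _ _ hyz).trans ih
  suffices ∀ {y}, TransGen R a y → m a ≤ m y →
      TransGen (fun x y => R x y ∧ m x = m y) a y from this h le_rfl
  intro y hy
  induction hy with
  | single hay => exact fun hle => single ⟨hay, le_antisymm hle (hm _ _ hay)⟩
  | @tail b c hab hbc ih =>
    intro hle
    have hcb : m c ≤ m b := hm _ _ hbc
    exact (ih (hle.trans hcb)).tail ⟨hbc, le_antisymm ((antitone_path hab).trans hle) hcb⟩

theorem self_restrict_of_middle {P : β → Prop} (hP : ∀ x y z, R x y → R y z → P y)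
    (h : TransGen R a a) : TransGen (fun x y => R x y ∧ P x ∧ P y) a a := by
  obtain ⟨w, -, hwa⟩ := tail'_iff.1 h
  obtain ⟨z, haz, -⟩ := head'_iff.1 h
  suffices ∀ {y}, TransGen R a y → (∃ z, R y z) →
      TransGen (fun x y => R x y ∧ P x ∧ P y) a y from this h ⟨z, haz⟩
  intro y hy
  induction hy with
  | single hay => exact fun ⟨z, hyz⟩ => single ⟨hay, hP _ _ _ hwa hay, hP _ _ _ hay hyz⟩
  | @tail b c hab hbc ih =>
    rintro ⟨z, hcz⟩
    obtain ⟨v, -, hvb⟩ := tail'_iff.1 hab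
    exact (ih ⟨c, hbc⟩).tail ⟨hbc, hP _ _ _ hvb hbc, hP _ _ _ hbc hcz⟩

end Relation.TransGen

namespace IsElemMatching

variable {F : Set (Finset α)} {M : Set (Finset α × Finset α)} {p q : Finset α × Finset α}

theorem fst_ssubset_snd (hM : IsElemMatching F M) (hp : p ∈ M) : p.1 ⊂ p.2 :=
  (hM.1 p hp).2.2.1

theorem card_snd (hM : IsElemMatching F M) (hp : p ∈ M) : p.2.card = p.1.card + 1 := by
  have := Finset.card_sdiff_add_card_eq_card (hM.fst_ssubset_snd hp).subset
  rw [(hM.1 p hp).2.2.2] at this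
  omega

theorem eq_of_fst_eq (hM : IsElemMatching F M) (hp : p ∈ M) (hq : q ∈ M) (h : p.1 = q.1) :
    p = q :=
  by_contra fun hne => (hM.2 p hp q hq hne).1 h

theorem eq_of_snd_eq (hM : IsElemMatching F M) (hp : p ∈ M) (hq : q ∈ M) (h : p.2 = q.2) :
    p = q :=
  by_contra fun hne => (hM.2 p hp q hq hne).2.2.2 h

theorem fst_ne_snd (hM : IsElemMatching F M) (hp : p ∈ M) (hq : q ∈ M) : p.1 ≠ q.2 := by
  by_cases hpq : p = q
  · exact hpq ▸ (hM.fst_ssubset_snd hp).ne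
  · exact (hM.2 p hp q hq hpq).2.1

end IsElemMatching

section Union

variable {F F₀ : Set (Finset α)} {M₀ M₁ : Set (Finset α × Finset α)}

theorem IsElemMatching.union (h₀ : IsElemMatching F₀ M₀) (h₁ : IsElemMatching (F \ F₀) M₁)
    (hF₀ : F₀ ⊆ F) : IsElemMatching F (M₀ ∪ M₁) := by
  have disjoint : ∀ p ∈ M₀, ∀ q ∈ M₁, p.1 ≠ q.1 ∧ p.1 ≠ q.2 ∧ p.2 ≠ q.1 ∧ p.2 ≠ q.2 := by
    intro p hp q hq
    obtain ⟨hp₁, hp₂, -⟩ := h₀.1 p hp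
    obtain ⟨⟨-, hq₁⟩, ⟨-, hq₂⟩, -⟩ := h₁.1 q hq
    exact ⟨ne_of_mem_of_not_mem hp₁ hq₁, ne_of_mem_of_not_mem hp₁ hq₂,
      ne_of_mem_of_not_mem hp₂ hq₁, ne_of_mem_of_not_mem hp₂ hq₂⟩
  refine ⟨?_, ?_⟩
  · rintro p (hp | hp)
    · obtain ⟨hp₁, hp₂, hcover⟩ := h₀.1 p hp
      exact ⟨hF₀ hp₁, hF₀ hp₂, hcover⟩
    · obtain ⟨hp₁, hp₂, hcover⟩ := h₁.1 p hp
      exact ⟨hp₁.1, hp₂.1, hcover⟩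
  · rintro p (hp | hp) q (hq | hq) hne
    · exact h₀.2 p hp q hq hne
    · exact disjoint p hp q hq
    · obtain ⟨h₁₁, h₁₂, h₂₁, h₂₂⟩ := disjoint q hq p hp
      exact ⟨h₁₁.symm, h₂₁.symm, h₁₂.symm, h₂₂.symm⟩
    · exact h₁.2 p hp q hq hne

theorem morseCritical_union_iff (h₀ : IsElemMatching F₀ M₀)
    (hcomplete : ∀ σ, ¬ MorseCritical F₀ M₀ σ) (σ : Finset α) :
    MorseCritical F (M₀ ∪ M₁) σ ↔ MorseCritical (F \ F₀) M₁ σ := by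
  constructor
  · rintro ⟨hσ, hunmatched⟩
    have hσ₀ : σ ∉ F₀ := fun hσ₀ =>
      hcomplete σ ⟨hσ₀, fun p hp => hunmatched p (Or.inl hp)⟩
    exact ⟨⟨hσ, hσ₀⟩, fun p hp => hunmatched p (Or.inr hp)⟩
  · rintro ⟨⟨hσ, hσ₀⟩, hunmatched⟩
    refine ⟨hσ, ?_⟩
    rintro p (hp | hp)
    · obtain ⟨hp₁, hp₂, -⟩ := h₀.1 p hp
      exact ⟨(ne_of_mem_of_not_mem hp₁ hσ₀).symm, (ne_of_mem_of_not_mem hp₂ hσ₀).symm⟩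
    · exact hunmatched p hp

theorem MorseEdge.of_union (h₀ : IsElemMatching F₀ M₀) {σ τ : Finset α}
    (h : MorseEdge F (M₀ ∪ M₁) σ τ) (hσ : σ ∈ F \ F₀) (hτ : τ ∈ F \ F₀) :
    MorseEdge (F \ F₀) M₁ σ τ := by
  obtain ⟨-, -, (hm₀ | hm₁) | ⟨hsub, hcard, hunmatched⟩⟩ := h
  · exact absurd (h₀.1 _ hm₀).1 hσ.2
  · exact ⟨hσ, hτ, Or.inl hm₁⟩
  · exact ⟨hσ, hτ, Or.inr ⟨hsub, hcard, fun hm => hunmatched (Or.inr hm)⟩⟩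

end Union

noncomputable def morseHeight (M : Set (Finset α × Finset α)) (σ : Finset α) : ℕ :=
  σ.card + if ∃ τ, (σ, τ) ∈ M then 1 else 0

namespace MorseEdge

variable {F : Set (Finset α)} {M : Set (Finset α × Finset α)} {σ τ : Finset α}

theorem card_eq_of_notMem (h : MorseEdge F M σ τ) (hm : (σ, τ) ∉ M) :
    σ.card = τ.card + 1 := by
  obtain ⟨-, -, hm' | ⟨hsub, hcard, -⟩⟩ := h
  · exact absurd hm' hm
  · have := Finset.card_sdiff_add_card_eq_card hsub.subset
    omega

theorem morseHeight_eq_of_mem (hM : IsElemMatching F M) (hm : (σ, τ) ∈ M) :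
    morseHeight M σ = morseHeight M τ := by
  have hcard := hM.card_snd hm
  have hσ : ∃ ρ, (σ, ρ) ∈ M := ⟨τ, hm⟩
  have hτ : ¬ ∃ ρ, (τ, ρ) ∈ M := fun ⟨_, hρ⟩ => hM.fst_ne_snd hρ hm rfl
  simp only [morseHeight, if_pos hσ, if_neg hτ] at hcard ⊢
  omega

theorem morseHeight_le (hM : IsElemMatching F M) (h : MorseEdge F M σ τ) :
    morseHeight M τ ≤ morseHeight M σ := by
  by_cases hm : (σ, τ) ∈ M
  · exact (morseHeight_eq_of_mem hM hm).ge
  · have := h.card_eq_of_notMem hm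
    unfold morseHeight
    split_ifs <;> omega

theorem mem_or_of_morseHeight_eq (h : MorseEdge F M σ τ)
    (heq : morseHeight M σ = morseHeight M τ) :
    (σ, τ) ∈ M ∨ (∃ ρ, (τ, ρ) ∈ M) ∧ ¬ ∃ ρ, (σ, ρ) ∈ M := by
  refine or_iff_not_imp_left.2 fun hm => ?_
  have := h.card_eq_of_notMem hm
  constructor
  · by_contra hτ
    simp only [morseHeight, if_neg hτ] at heq
    split_ifs at heq <;> omega
  · intro hσ
    simp only [morseHeight, if_pos hσ] at heq
    split_ifs at heq <;> omega

end MorseEdge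

section Toggle

variable {F : Set (Finset α)} {e : α} {σ : Finset α}

def pairedPart (F : Set (Finset α)) (e : α) : Set (Finset α) :=
  {σ | σ.erase e ∈ F ∧ insert e σ ∈ F}

def togglePairing (F : Set (Finset α)) (e : α) : Set (Finset α × Finset α) :=
  {p | p.1 ∈ pairedPart F e ∧ e ∉ p.1 ∧ p.2 = insert e p.1}

theorem pairedPart_subset : pairedPart F e ⊆ F := by
  rintro σ ⟨herase, hinsert⟩
  by_cases he : e ∈ σ
  · rwa [Finset.insert_eq_of_mem he] at hinsert
  · rwa [Finset.erase_eq_of_notMem he] at herase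

theorem insert_mem_pairedPart (hσ : σ ∈ pairedPart F e) : insert e σ ∈ pairedPart F e :=
  ⟨by rw [Finset.erase_insert_eq_erase]; exact hσ.1, by rw [Finset.insert_idem]; exact hσ.2⟩

theorem erase_mem_pairedPart (hσ : σ ∈ pairedPart F e) : σ.erase e ∈ pairedPart F e := by
  refine ⟨by rw [Finset.erase_idem]; exact hσ.1, ?_⟩
  by_cases he : e ∈ σ
  · rw [Finset.insert_erase he]; exact pairedPart_subset hσ
  · rw [Finset.erase_eq_of_notMem he]; exact hσ.2

theorem pairedPart_pairedPart : pairedPart (pairedPart F e) e = pairedPart F e :=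
  Set.ext fun _ => ⟨fun hσ => ⟨pairedPart_subset hσ.1, pairedPart_subset hσ.2⟩,
    fun hσ => ⟨erase_mem_pairedPart hσ, insert_mem_pairedPart hσ⟩⟩

theorem togglePairing_pairedPart : togglePairing (pairedPart F e) e = togglePairing F e := by
  rw [togglePairing, pairedPart_pairedPart, togglePairing]

theorem mk_insert_mem_togglePairing (hσ : σ ∈ pairedPart F e) (he : e ∉ σ) :
    (σ, insert e σ) ∈ togglePairing F e :=
  ⟨hσ, he, rfl⟩

theorem mk_erase_mem_togglePairing (hσ : σ ∈ pairedPart F e) (he : e ∈ σ) :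
    (σ.erase e, σ) ∈ togglePairing F e :=
  ⟨erase_mem_pairedPart hσ, Finset.notMem_erase e σ, (Finset.insert_erase he).symm⟩

theorem isElemMatching_togglePairing : IsElemMatching (pairedPart F e) (togglePairing F e) := by
  refine ⟨?_, ?_⟩
  · rintro ⟨σ, τ⟩ ⟨hσ, he, hτ : τ = insert e σ⟩
    subst hτ
    exact ⟨hσ, insert_mem_pairedPart hσ, Finset.ssubset_insert he,
      by rw [Finset.insert_sdiff_cancel he, Finset.card_singleton]⟩
  · rintro ⟨σ, σ'⟩ ⟨-, hσe, hσ' : σ' = insert e σ⟩ ⟨τ, τ'⟩ ⟨-, hτe, hτ' : τ' = insert e τ⟩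
      hne
    subst hσ' hτ'
    have hστ : σ ≠ τ := fun h => hne (h ▸ rfl)
    refine ⟨hστ, fun h => hσe (h ▸ Finset.mem_insert_self e τ),
      fun h => hτe (h ▸ Finset.mem_insert_self e σ), fun h => hστ ?_⟩
    simpa [Finset.erase_insert hσe, Finset.erase_insert hτe] using congrArg (·.erase e) h

theorem not_morseCritical_togglePairing :
    ¬ MorseCritical (pairedPart F e) (togglePairing F e) σ := by
  rintro ⟨hσ, hunmatched⟩
  by_cases he : e ∈ σ
  · exact (hunmatched _ (mk_erase_mem_togglePairing hσ he)).2 rfl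
  · exact (hunmatched _ (mk_insert_mem_togglePairing hσ he)).1 rfl

end Toggle

section Acyclic

variable {F : Set (Finset α)} {e : α} {M M₁ : Set (Finset α × Finset α)} {σ τ : Finset α}

theorem MorseEdge.mem_of_mem (hM : IsElemMatching F M) (hM₀ : togglePairing F e ⊆ M)
    (h : MorseEdge F M σ τ) (he : e ∈ σ) : e ∈ τ := by
  obtain ⟨hσ, hτ, hm | ⟨hsub, hcard, hunmatched⟩⟩ := h
  · exact (hM.fst_ssubset_snd hm).subset he
  · by_contra heτ
    have hσ_eq : insert e τ = σ := by
      refine Finset.eq_of_subset_of_card_le (Finset.insert_subset he hsub.subset) ?_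
      have := Finset.card_sdiff_add_card_eq_card hsub.subset
      rw [Finset.card_insert_of_notMem heτ]
      omega
    subst hσ_eq
    exact hunmatched (hM₀ (mk_insert_mem_togglePairing
      ⟨by rwa [Finset.erase_eq_of_notMem heτ], hσ⟩ heτ))

theorem notMem_pairedPart_of_level (hM : IsElemMatching F M) (hM₀ : togglePairing F e ⊆ M)
    {ρ : Finset α} (hρσ : MorseEdge F M ρ σ) (hστ : MorseEdge F M σ τ)
    (hρσ_height : morseHeight M ρ = morseHeight M σ)
    (hστ_height : morseHeight M σ = morseHeight M τ)
    (hρσ_mem : (e ∉ ρ) = (e ∉ σ)) (hστ_mem : (e ∉ σ) = (e ∉ τ)) :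
    σ ∉ pairedPart F e := by
  intro hσ
  by_cases he : e ∈ σ
  · have htop := hM₀ (mk_erase_mem_togglePairing hσ he)
    rcases hρσ.mem_or_of_morseHeight_eq hρσ_height with hm | ⟨⟨_, hbot⟩, -⟩
    · have hρ : ρ = σ.erase e := congrArg Prod.fst (hM.eq_of_snd_eq hm htop rfl)
      exact (hρσ_mem ▸ hρ ▸ Finset.notMem_erase e σ) he
    · exact hM.fst_ne_snd hbot htop rfl
  · have hbot := hM₀ (mk_insert_mem_togglePairing hσ he)
    rcases hστ.mem_or_of_morseHeight_eq hστ_height with hm | ⟨-, hnot_bot⟩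
    · have hτ : τ = insert e σ := congrArg Prod.snd (hM.eq_of_fst_eq hm hbot rfl)
      exact (hστ_mem ▸ he) (hτ ▸ Finset.mem_insert_self e σ)
    · exact hnot_bot ⟨_, hbot⟩

theorem morseAcyclic_togglePairing_union (hM₁ : IsElemMatching (F \ pairedPart F e) M₁)
    (hacyclic : MorseAcyclic (F \ pairedPart F e) M₁) :
    MorseAcyclic F (togglePairing F e ∪ M₁) := by
  have hM := isElemMatching_togglePairing.union hM₁ pairedPart_subset
  have hM₀ : togglePairing F e ⊆ togglePairing F e ∪ M₁ := Set.subset_union_left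
  intro σ hcycle
  have hlevel := (hcycle.self_restrict_of_antitone (m := fun τ => e ∉ τ)
      fun _ _ h hy hx => hy (h.mem_of_mem hM hM₀ hx)).self_restrict_of_antitone
    (m := morseHeight _) fun _ _ h => h.1.morseHeight_le hM
  have hcycle₁ := hlevel.self_restrict_of_middle (P := (· ∈ F \ pairedPart F e))
    fun _ _ _ ⟨⟨hρσ, hρσ_mem⟩, hρσ_height⟩ ⟨⟨hστ, hστ_mem⟩, hστ_height⟩ =>
      ⟨hρσ.2.1, notMem_pairedPart_of_level hM hM₀ hρσ hστ hρσ_height hστ_height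
        hρσ_mem hστ_mem⟩
  exact hacyclic σ (Relation.TransGen.mono (fun _ _ ⟨⟨⟨h, _⟩, _⟩, hρ, hτ⟩ =>
    h.of_union isElemMatching_togglePairing hρ hτ) _ _ hcycle₁)

-- `pairedPart` is idempotent, so `togglePairing F e` on its own is the case `M₁ = ∅` of the
-- union over the family `pairedPart F e`.
theorem morseAcyclic_togglePairing : MorseAcyclic (pairedPart F e) (togglePairing F e) := by
  have h := morseAcyclic_togglePairing_union (F := pairedPart F e) (e := e) (M₁ := ∅)
    ⟨fun _ h => h.elim, fun _ h => h.elim⟩ (by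
      rw [pairedPart_pairedPart, Set.sdiff_self]
      intro σ hcycle
      obtain ⟨_, ⟨hσ, -⟩, -⟩ := Relation.TransGen.head'_iff.1 hcycle
      exact hσ)
  rwa [togglePairing_pairedPart, Set.union_empty] at h

end Acyclic

/-- The standard lemma on splitting off an element `e₀`: with
`F₀ = {σ : σ \ {e₀} ∈ F and σ ∪ {e₀} ∈ F}` and `F₁ = F \ F₀`, the pairing
`M₀ = {(σ, σ ∪ {e₀}) : σ ∈ F₀, e₀ ∉ σ}` is a complete acyclic element matching on `F₀`,
and for any acyclic element matching `M₁` on `F₁`, the union `M₀ ∪ M₁` is an acyclic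
element matching on `F` whose critical sets are exactly those of `M₁`. -/
theorem boolean_lemma {α : Type} [DecidableEq α] (F : Set (Finset α)) (e₀ : α)
    (F₀ F₁ : Set (Finset α)) (M₀ : Set (Finset α × Finset α))
    (hF₀ : F₀ = {σ | σ.erase e₀ ∈ F ∧ insert e₀ σ ∈ F})
    (hF₁ : F₁ = F \ F₀)
    (hM₀ : M₀ = {p | p.1 ∈ F₀ ∧ e₀ ∉ p.1 ∧ p.2 = insert e₀ p.1}) :
    (IsElemMatching F₀ M₀ ∧ MorseAcyclic F₀ M₀ ∧ ∀ σ, ¬ MorseCritical F₀ M₀ σ) ∧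
    ∀ M₁ : Set (Finset α × Finset α), IsElemMatching F₁ M₁ → MorseAcyclic F₁ M₁ →
      IsElemMatching F (M₀ ∪ M₁) ∧ MorseAcyclic F (M₀ ∪ M₁) ∧
      ∀ σ, MorseCritical F (M₀ ∪ M₁) σ ↔ MorseCritical F₁ M₁ σ := by
  subst hF₀ hF₁ hM₀
  refine ⟨⟨isElemMatching_togglePairing, morseAcyclic_togglePairing,
    fun _ => not_morseCritical_togglePairing⟩, fun M₁ hM₁ hacyclic => ?_⟩
  exact ⟨isElemMatching_togglePairing.union hM₁ pairedPart_subset,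
    morseAcyclic_togglePairing_union hM₁ hacyclic,
    morseCritical_union_iff isElemMatching_togglePairing fun _ => not_morseCritical_togglePairing⟩
end

section
/- Let F ⊆ 2^E and let φ : F → Q be a map to a poset Q that is monotone with respect to inclusion. If for each q ∈ Q the fiber φ⁻¹(q) carries an acyclic element matching M_q, then ⋃_{q ∈ Q} M_q is an acyclic element matching on F. -/
attribute [local instance] Classical.propDecidable

variable {α : Type} [DecidableEq α]

/-- Cluster Lemma: if `φ : F → Q` is monotone into a poset `Q` and each fiber `φ⁻¹(q)`
carries an acyclic element matching `M q`, then `⋃ q, M q` is an acyclic element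
matching on `F`. -/
theorem cluster_lemma {α : Type} [DecidableEq α] {Q : Type} [PartialOrder Q]
    (F : Set (Finset α)) (φ : Finset α → Q)
    (hmono : ∀ σ ∈ F, ∀ τ ∈ F, σ ⊆ τ → φ σ ≤ φ τ)
    (M : Q → Set (Finset α × Finset α))
    (hM : ∀ q, IsElemMatching {σ ∈ F | φ σ = q} (M q) ∧
               MorseAcyclic {σ ∈ F | φ σ = q} (M q)) :
    IsElemMatching F (⋃ q, M q) ∧ MorseAcyclic F (⋃ q, M q) := by
  set N := ⋃ q, M q with hN
  have hmemN : ∀ p ∈ N, ∃ q, p ∈ M q := by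
    intro p hp
    simpa [hN] using hp
  have hsub : ∀ q, M q ⊆ N := by
    intro q p hp
    exact Set.mem_iUnion.2 ⟨q, hp⟩
  have hpair : ∀ q, ∀ p ∈ M q, p.1 ∈ F ∧ φ p.1 = q ∧ p.2 ∈ F ∧ φ p.2 = q ∧
      p.1 ⊂ p.2 ∧ (p.2 \ p.1).card = 1 := by
    intro q p hp
    obtain ⟨⟨h1, _⟩, _⟩ := hM q
    obtain ⟨h1', h2', h3, h4⟩ := h1 p hp
    exact ⟨h1'.1, h1'.2, h2'.1, h2'.2, h3, h4⟩
  have hmatch : IsElemMatching F N := by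
    constructor
    · intro p hp
      obtain ⟨q, hq⟩ := hmemN p hp
      obtain ⟨a, _, b, _, c, d⟩ := hpair q p hq
      exact ⟨a, b, c, d⟩
    · intro p hp p' hp' hne
      obtain ⟨q, hq⟩ := hmemN p hp
      obtain ⟨q', hq'⟩ := hmemN p' hp'
      by_cases h : q = q'
      · subst h
        exact (hM q).1.2 p hq p' hq' hne
      · obtain ⟨_, e1, _, e2, _, _⟩ := hpair q p hq
        obtain ⟨_, f1, _, f2, _, _⟩ := hpair q' p' hq'
        refine ⟨?_, ?_, ?_, ?_⟩ <;> intro hc <;> apply h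
        · rw [← e1, hc, f1]
        · rw [← e1, hc, f2]
        · rw [← e2, hc, f1]
        · rw [← e2, hc, f2]
  refine ⟨hmatch, ?_⟩
  -- edges are φ-nonincreasing
  have hdec : ∀ a b, MorseEdge F N a b → φ b ≤ φ a := by
    rintro a b ⟨haF, hbF, hup | ⟨hss, _, _⟩⟩
    · obtain ⟨q, hq⟩ := hmemN _ hup
      obtain ⟨_, e1, _, e2, _, _⟩ := hpair q _ hq
      simp only at e1 e2
      rw [e1, e2]
    · exact hmono b hbF a haF hss.subset
  have htg : ∀ a b, Relation.TransGen (MorseEdge F N) a b → φ b ≤ φ a := by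
    intro a b h
    induction h with
    | single h => exact hdec _ _ h
    | tail _ h ih => exact le_trans (hdec _ _ h) ih
  -- lift an edge between same-fiber vertices to a fiber edge
  have hlift : ∀ a b, MorseEdge F N a b → φ b = φ a →
      MorseEdge {σ ∈ F | φ σ = φ a} (M (φ a)) a b := by
    rintro a b ⟨haF, hbF, hup | ⟨hss, hcard, hnm⟩⟩ heq
    · obtain ⟨q, hq⟩ := hmemN _ hup
      obtain ⟨_, e1, _, _, _, _⟩ := hpair q _ hq
      simp only at e1
      refine ⟨⟨haF, rfl⟩, ⟨hbF, heq⟩, Or.inl ?_⟩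
      rwa [e1]
    · exact ⟨⟨haF, rfl⟩, ⟨hbF, heq⟩, Or.inr ⟨hss, hcard, fun hc => hnm (hsub _ hc)⟩⟩
  intro σ hcyc
  set q := φ σ with hq
  have key : ∀ b, Relation.TransGen (MorseEdge F N) σ b → φ b = q →
      Relation.TransGen (MorseEdge {σ ∈ F | φ σ = q} (M q)) σ b := by
    intro b h
    induction h with
    | single h =>
      intro hb
      have h' := hlift _ _ h (hb.trans hq)
      rw [← hq] at h'
      exact Relation.TransGen.single h'
    | @tail c b h1 h2 ih =>
      intro hb
      have hcq : φ c = q := by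
        have h1' : φ c ≤ q := htg _ _ h1
        have h2' : φ b ≤ φ c := hdec _ _ h2
        exact le_antisymm h1' (hb ▸ h2')
      have := hlift _ _ h2 (by rw [hb, hcq])
      rw [hcq] at this
      exact (ih hcq).tail this
  exact (hM q).2 σ (key σ hcyc rfl)
end

section
/- Let F be a family of graphs on a fixed vertex set V, all with the same matching number, partitioned according to their Gallai–Edmonds decompositions (including the components of D). If each non-empty part F_{(D₁,…,D_r;A;C)} has an acyclic element matching, then the union of these matchings is an acyclic element matching on F. -/
attribute [local instance] Classical.propDecidable

variable {α : Type} [DecidableEq α]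

/-- A matching: a finite set of non-loop edges that are pairwise vertex-disjoint. -/
def IsMatching {V : Type} (M : Finset (Sym2 V)) : Prop :=
  (∀ e ∈ M, ¬ e.IsDiag) ∧ ∀ e ∈ M, ∀ f ∈ M, e ≠ f → ∀ v, v ∈ e → v ∉ f

/-- The matching number of a finite edge set. -/
noncomputable def enu {V : Type} (G : Finset (Sym2 V)) : ℕ :=
  (G.powerset.filter fun M => IsMatching M).sup Finset.card

/-- Adjacency in the graph with edge set `G`. -/
def eAdj {V : Type} (G : Finset (Sym2 V)) (x y : V) : Prop := s(x, y) ∈ G ∧ x ≠ y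

/-- Deleting a vertex from the graph with edge set `G`. -/
noncomputable def edelV {V : Type} (G : Finset (Sym2 V)) (v : V) : Finset (Sym2 V) :=
  G.filter fun e => v ∉ e

/-- The Gallai–Edmonds set `D(G) = {v : ν(G - v) = ν(G)}`. -/
def eD {V : Type} (G : Finset (Sym2 V)) : Set V := {v | enu (edelV G v) = enu G}

/-- The Gallai–Edmonds set `A(G) = N_G(D(G))`. -/
def eA {V : Type} (G : Finset (Sym2 V)) : Set V :=
  {w | w ∉ eD G ∧ ∃ d ∈ eD G, eAdj G w d}

/-- Same component of the induced subgraph on `D(G)`. -/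
def eReachD {V : Type} (G : Finset (Sym2 V)) : V → V → Prop :=
  Relation.ReflTransGen fun a b => eAdj G a b ∧ a ∈ eD G ∧ b ∈ eD G

/-- Two graphs have the same Gallai–Edmonds decomposition, including the components
of `D` (then `C` agrees as well, being the complement of `D ∪ A`). -/
def sameGE {V : Type} (G₁ G₂ : Finset (Sym2 V)) : Prop :=
  eD G₁ = eD G₂ ∧ eA G₁ = eA G₂ ∧ ∀ x y, eReachD G₁ x y ↔ eReachD G₂ x y

/-!
Order graphs by `G ≤ H` iff `D(G) ⊆ D(H)` and, when `D(G) = D(H)`, also `A(G) ⊆ A(H)` and every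
component of `G[D]` lies in a component of `H[D]`. This is a preorder whose equivalence classes
are the parts of the Gallai–Edmonds partition, and since `D` can only grow when edges are added
without changing `ν`, every unmatched (downward) edge of the Morse digraph of the union goes weakly
down in it, while matched edges stay inside a part. Hence a directed cycle lies in one part, where
the matching is acyclic by assumption.
-/

namespace Relation.TransGen

variable {β : Type*} {e r : β → β → Prop} {a b : β}

theorem rel_swap [IsTrans β r] (he : ∀ x y, e x y → r y x) (h : TransGen e a b) : r b a := by
  induction h with
  | single hab => exact he _ _ hab
  | tail _ hbc ih => exact _root_.trans (he _ _ hbc) ih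

theorem restrict_antisymmRel [IsPreorder β r] (he : ∀ x y, e x y → r y x)
    (h : TransGen e a b) (hab : r a b) :
    TransGen (fun x y => e x y ∧ AntisymmRel r x a ∧ AntisymmRel r y a) a b := by
  induction h with
  | single h => exact single ⟨h, .refl r a, he _ _ h, hab⟩
  | @tail b c hpath hbc ih =>
    have hrab : r a b := _root_.trans hab (he _ _ hbc)
    have hrba : r b a := hpath.rel_swap he
    exact tail (ih hrab) ⟨hbc, ⟨hrba, hrab⟩, _root_.trans (he _ _ hbc) hrba, hab⟩

end Relation.TransGen

section Patchwork

variable {r : Finset α → Finset α → Prop} [IsPreorder (Finset α) r]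
  {F : Set (Finset α)} {M : Finset α → Set (Finset α × Finset α)}

theorem isElemMatching_iUnion
    (hconst : ∀ G₁ ∈ F, ∀ G₂ ∈ F, AntisymmRel r G₁ G₂ → M G₁ = M G₂)
    (hM : ∀ G₀ ∈ F, IsElemMatching {G ∈ F | AntisymmRel r G G₀} (M G₀)) :
    IsElemMatching F (⋃ G₀ ∈ F, M G₀) := by
  constructor
  · intro p hp
    obtain ⟨G₀, hG₀, hp⟩ := Set.mem_iUnion₂.1 hp
    obtain ⟨⟨hp₁, -⟩, ⟨hp₂, -⟩, hss, hcard⟩ := (hM G₀ hG₀).1 p hp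
    exact ⟨hp₁, hp₂, hss, hcard⟩
  · intro p hp q hq hpq
    obtain ⟨G₁, hG₁, hp⟩ := Set.mem_iUnion₂.1 hp
    obtain ⟨G₂, hG₂, hq⟩ := Set.mem_iUnion₂.1 hq
    by_cases h₁₂ : AntisymmRel r G₁ G₂
    · exact (hM G₁ hG₁).2 p hp q (hconst G₁ hG₁ G₂ hG₂ h₁₂ ▸ hq) hpq
    · have hne : ∀ σ τ, AntisymmRel r σ G₁ → AntisymmRel r τ G₂ → σ ≠ τ := by
        rintro σ _ hσ hτ rfl
        exact h₁₂ (hσ.symm.trans hτ)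
      obtain ⟨⟨-, hp₁⟩, ⟨-, hp₂⟩, -⟩ := (hM G₁ hG₁).1 p hp
      obtain ⟨⟨-, hq₁⟩, ⟨-, hq₂⟩, -⟩ := (hM G₂ hG₂).1 q hq
      exact ⟨hne _ _ hp₁ hq₁, hne _ _ hp₁ hq₂, hne _ _ hp₂ hq₁, hne _ _ hp₂ hq₂⟩

theorem MorseEdge.of_iUnion
    (hconst : ∀ G₁ ∈ F, ∀ G₂ ∈ F, AntisymmRel r G₁ G₂ → M G₁ = M G₂)
    (hM : ∀ G₀ ∈ F, IsElemMatching {G ∈ F | AntisymmRel r G G₀} (M G₀))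
    {σ x y : Finset α} (hσ : σ ∈ F) (hx : AntisymmRel r x σ) (hy : AntisymmRel r y σ)
    (h : MorseEdge F (⋃ G₀ ∈ F, M G₀) x y) :
    MorseEdge {G ∈ F | AntisymmRel r G σ} (M σ) x y := by
  obtain ⟨hxF, hyF, hup | ⟨hss, hcard, hnm⟩⟩ := h
  · obtain ⟨G₀, hG₀, hp⟩ := Set.mem_iUnion₂.1 hup
    have hG₀σ : AntisymmRel r G₀ σ := ((hM G₀ hG₀).1 _ hp).1.2.symm.trans hx
    exact ⟨⟨hxF, hx⟩, ⟨hyF, hy⟩, .inl (hconst G₀ hG₀ σ hσ hG₀σ ▸ hp)⟩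
  · exact ⟨⟨hxF, hx⟩, ⟨hyF, hy⟩, .inr ⟨hss, hcard, fun h => hnm (Set.mem_iUnion₂.2 ⟨σ, hσ, h⟩)⟩⟩

theorem morseAcyclic_iUnion
    (hcover : ∀ σ ∈ F, ∀ τ ∈ F, σ ⊂ τ → (τ \ σ).card = 1 → r σ τ)
    (hconst : ∀ G₁ ∈ F, ∀ G₂ ∈ F, AntisymmRel r G₁ G₂ → M G₁ = M G₂)
    (hM : ∀ G₀ ∈ F, IsElemMatching {G ∈ F | AntisymmRel r G G₀} (M G₀) ∧
                    MorseAcyclic {G ∈ F | AntisymmRel r G G₀} (M G₀)) :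
    MorseAcyclic F (⋃ G₀ ∈ F, M G₀) := by
  intro σ hcyc
  obtain ⟨_, ⟨hσ, -⟩, -⟩ := Relation.TransGen.head'_iff.1 hcyc
  have hdown : ∀ x y, MorseEdge F (⋃ G₀ ∈ F, M G₀) x y → r y x := by
    rintro x y ⟨hxF, hyF, hup | ⟨hss, hcard, -⟩⟩
    · obtain ⟨G₀, hG₀, hp⟩ := Set.mem_iUnion₂.1 hup
      obtain ⟨⟨-, hx⟩, ⟨-, hy⟩, -⟩ := (hM G₀ hG₀).1.1 _ hp
      exact (hy.trans hx.symm).1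
    · exact hcover y hyF x hxF hss hcard
  refine (hM σ hσ).2 σ (Relation.TransGen.mono ?_ _ _ (hcyc.restrict_antisymmRel hdown (refl σ)))
  rintro x y ⟨hxy, hx, hy⟩
  exact MorseEdge.of_iUnion hconst (fun G₀ hG₀ => (hM G₀ hG₀).1) hσ hx hy hxy

end Patchwork

section GallaiEdmonds

variable {V : Type} {G H : Finset (Sym2 V)}

theorem enu_mono (h : G ⊆ H) : enu G ≤ enu H :=
  Finset.sup_mono (Finset.filter_subset_filter _ (Finset.powerset_mono.2 h))

theorem eD_subset_eD (h : G ⊆ H) (hν : enu G = enu H) : eD G ⊆ eD H := by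
  intro v (hv : enu (edelV G v) = enu G)
  show enu (edelV H v) = enu H
  refine le_antisymm (enu_mono (Finset.filter_subset _ _)) ?_
  calc enu H = enu (edelV G v) := hν.symm.trans hv.symm
    _ ≤ enu (edelV H v) := enu_mono (Finset.filter_subset_filter _ h)

def gallaiEdmondsLE (G H : Finset (Sym2 V)) : Prop :=
  eD G ⊆ eD H ∧ (eD G = eD H → eA G ⊆ eA H ∧ ∀ x y, eReachD G x y → eReachD H x y)

instance : IsPreorder (Finset (Sym2 V)) gallaiEdmondsLE where
  refl _ := ⟨subset_rfl, fun _ => ⟨subset_rfl, fun _ _ => id⟩⟩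
  trans _ _ _ hGH hHK := by
    refine ⟨hGH.1.trans hHK.1, fun hGK => ?_⟩
    have hGH' := hGH.1.antisymm (hGK ▸ hHK.1)
    obtain ⟨hA₁, hR₁⟩ := hGH.2 hGH'
    obtain ⟨hA₂, hR₂⟩ := hHK.2 (hGH' ▸ hGK)
    exact ⟨hA₁.trans hA₂, fun x y h => hR₂ x y (hR₁ x y h)⟩

theorem antisymmRel_gallaiEdmondsLE_iff : AntisymmRel gallaiEdmondsLE G H ↔ sameGE G H := by
  constructor
  · rintro ⟨⟨hD, hGH⟩, ⟨hD', hHG⟩⟩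
    have hDe := hD.antisymm hD'
    exact ⟨hDe, (hGH hDe).1.antisymm (hHG hDe.symm).1,
      fun x y => ⟨(hGH hDe).2 x y, (hHG hDe.symm).2 x y⟩⟩
  · rintro ⟨hD, hA, hR⟩
    exact ⟨⟨hD.subset, fun _ => ⟨hA.subset, fun x y => (hR x y).1⟩⟩,
      ⟨hD.symm.subset, fun _ => ⟨hA.symm.subset, fun x y => (hR x y).2⟩⟩⟩

theorem gallaiEdmondsLE_of_subset (h : G ⊆ H) (hν : enu G = enu H) : gallaiEdmondsLE G H := by
  refine ⟨eD_subset_eD h hν, fun hD => ⟨?_, fun x y => Relation.ReflTransGen.mono ?_ x y⟩⟩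
  · rintro w ⟨hw, d, hd, hadj⟩
    exact ⟨hD ▸ hw, d, hD ▸ hd, h hadj.1, hadj.2⟩
  · rintro a b ⟨hadj, ha, hb⟩
    exact ⟨⟨h hadj.1, hadj.2⟩, hD ▸ ha, hD ▸ hb⟩

end GallaiEdmonds

theorem GE_partition_acyclic_general {V : Type} [DecidableEq V]
    (F : Set (Finset (Sym2 V))) (ν₀ : ℕ)
    (hν : ∀ G ∈ F, enu G = ν₀)
    (𝓜 : Finset (Sym2 V) → Set (Finset (Sym2 V) × Finset (Sym2 V)))
    (hconst : ∀ G₁ ∈ F, ∀ G₂ ∈ F, sameGE G₁ G₂ → 𝓜 G₁ = 𝓜 G₂)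
    (hM : ∀ G₀ ∈ F, IsElemMatching {G ∈ F | sameGE G G₀} (𝓜 G₀) ∧
                    MorseAcyclic {G ∈ F | sameGE G G₀} (𝓜 G₀)) :
    IsElemMatching F (⋃ G₀ ∈ F, 𝓜 G₀) ∧ MorseAcyclic F (⋃ G₀ ∈ F, 𝓜 G₀) := by
  have hGE : (sameGE : Finset (Sym2 V) → _ → Prop) = AntisymmRel gallaiEdmondsLE := by
    ext G H
    exact antisymmRel_gallaiEdmondsLE_iff.symm
  rw [hGE] at hconst hM
  have hcover : ∀ σ ∈ F, ∀ τ ∈ F, σ ⊂ τ → (τ \ σ).card = 1 → gallaiEdmondsLE σ τ :=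
    fun σ hσ τ hτ hστ _ => gallaiEdmondsLE_of_subset hστ.subset ((hν σ hσ).trans (hν τ hτ).symm)
  exact ⟨isElemMatching_iUnion hconst fun G₀ hG₀ => (hM G₀ hG₀).1,
    morseAcyclic_iUnion hcover hconst hM⟩

/-- Let `F` be a family of graphs on a fixed vertex set, all with the same matching
number, partitioned according to their Gallai–Edmonds decompositions. If each non-empty
part carries an acyclic element matching (given by `𝓜`, constant on parts), then the
union of these matchings is an acyclic element matching on `F`. -/
theorem GE_partition_acyclic {V : Type} [DecidableEq V]
    (F : Set (Finset (Sym2 V))) (ν₀ : ℕ)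
    (hν : ∀ G ∈ F, enu G = ν₀)
    (hsimple : ∀ G ∈ F, ∀ e ∈ G, ¬ e.IsDiag)
    (𝓜 : Finset (Sym2 V) → Set (Finset (Sym2 V) × Finset (Sym2 V)))
    (hconst : ∀ G₁ ∈ F, ∀ G₂ ∈ F, sameGE G₁ G₂ → 𝓜 G₁ = 𝓜 G₂)
    (hM : ∀ G₀ ∈ F, IsElemMatching {G ∈ F | sameGE G G₀} (𝓜 G₀) ∧
                    MorseAcyclic {G ∈ F | sameGE G G₀} (𝓜 G₀)) :
    IsElemMatching F (⋃ G₀ ∈ F, 𝓜 G₀) ∧ MorseAcyclic F (⋃ G₀ ∈ F, 𝓜 G₀) :=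
  GE_partition_acyclic_general F ν₀ hν 𝓜 hconst hM
end
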